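/- arXiv:math/0511208 — 6 statements merged into one kernel-verified Lean document; each statement's English description precedes it below -/
import Mathlib

section
/- Let ϑ > 1/2, γ ≥ 0, a ∈ (0,1], b ∈ ℝ, C₁, C₂ < ∞. Suppose (f_j)_{j≥1} are functions on [0,T]^d satisfying ‖f_j‖ ≤ C₁ j^{−ϑ} (log(1+j))^γ and [f_j]_a ≤ C₂ j^b for all j. Then for every ρ ∈ (0,1] with ρ < (ϑ − 1/2)/(b+ϑ)_+ (interpreted as no constraint when (b+ϑ)_+ = 0), the series ∑_{j≥1} [f_j]_{aρ}² converges, where [f_j]_{aρ} is the aρ-Hölder seminorm. -/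
/-!
Bounding `|f s - f t|` by the minimum of the Hölder bound `C₂ j^b |s-t|^a` and the sup bound
`2 C₁ j^{-ϑ} (log(1+j))^γ`, and then the minimum by the geometric mean with weights `ρ, 1-ρ`,
gives `[f_j]_{aρ} ≲ j^{bρ - ϑ(1-ρ)} (log(1+j))^{γ(1-ρ)}`. The hypothesis on `ρ` is exactly
`2(bρ - ϑ(1-ρ)) < -1`, and the logarithm is absorbed into an arbitrarily small power of `j`.
-/

open Real

/-- the cube `[0,T]^d` with the Euclidean metric -/
def cube (d : ℕ) (T : ℝ) : Set (EuclideanSpace ℝ (Fin d)) :=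
  {x | ∀ i, x i ∈ Set.Icc (0:ℝ) T}

theorem min_le_rpow_mul_rpow {x y ρ : ℝ} (hx : 0 ≤ x) (hy : 0 ≤ y) (hρ0 : 0 ≤ ρ)
    (hρ1 : ρ ≤ 1) :
    min x y ≤ x ^ ρ * y ^ (1 - ρ) := by
  rcases le_total x y with h | h
  · calc min x y = x ^ ρ * x ^ (1 - ρ) := by
          rw [min_eq_left h, ← rpow_add' hx (by norm_num), add_sub_cancel, rpow_one]
      _ ≤ x ^ ρ * y ^ (1 - ρ) := by gcongr
  · calc min x y = y ^ ρ * y ^ (1 - ρ) := by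
          rw [min_eq_right h, ← rpow_add' hy (by norm_num), add_sub_cancel, rpow_one]
      _ ≤ x ^ ρ * y ^ (1 - ρ) := by gcongr

theorem log_one_add_le_rpow {x δ : ℝ} (hx : 1 ≤ x) (hδ : 0 < δ) :
    log (1 + x) ≤ 2 ^ δ / δ * x ^ δ :=
  calc log (1 + x) ≤ (1 + x) ^ δ / δ := log_le_rpow_div (by linarith) hδ
    _ ≤ (2 * x) ^ δ / δ := by gcongr; linarith
    _ = 2 ^ δ / δ * x ^ δ := by rw [mul_rpow zero_le_two (by linarith)]; ring

theorem summable_rpow_mul_log_one_add_rpow {p q : ℝ} (hp : p < -1) (hq : 0 ≤ q) :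
    Summable fun n : ℕ => (n : ℝ) ^ p * log (1 + n) ^ q := by
  set δ := (-1 - p) / (q + 1)
  have hδ : 0 < δ := div_pos (by linarith) (by linarith)
  have hexp : p + δ * q < -1 := by
    have : δ * q < δ * (q + 1) := by nlinarith
    rw [div_mul_cancel₀ _ (by linarith : q + 1 ≠ 0)] at this
    linarith
  have hlog (n : ℕ) : 0 ≤ log (1 + n) := log_nonneg (le_add_of_nonneg_right n.cast_nonneg)
  refine .of_nonneg_of_le (fun n => mul_nonneg (by positivity) (rpow_nonneg (hlog n) _))
    (fun n => ?_)
    ((summable_nat_rpow.mpr hexp).mul_left ((2 ^ δ / δ) ^ q))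
  rcases Nat.eq_zero_or_pos n with rfl | hn
  · simp [zero_rpow (by linarith : p ≠ 0), zero_rpow (by linarith : p + δ * q ≠ 0)]
  have hn1 : (1 : ℝ) ≤ n := by exact_mod_cast hn
  calc (n : ℝ) ^ p * log (1 + n) ^ q ≤ (n : ℝ) ^ p * (2 ^ δ / δ * (n : ℝ) ^ δ) ^ q := by
        gcongr
        exacts [hlog n, log_one_add_le_rpow hn1 hδ]
    _ = (2 ^ δ / δ) ^ q * (n : ℝ) ^ (p + δ * q) := by
        rw [mul_rpow (by positivity) (by positivity), ← rpow_mul (by positivity),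
          rpow_add (by linarith)]
        ring

theorem summable_sq_of_le_rpow_mul_log_rpow {u : ℕ → ℝ} {K e g : ℝ} (he : 2 * e < -1)
    (hg : 0 ≤ g) (hu0 : ∀ n, 0 ≤ u n)
    (hu : ∀ n : ℕ, 1 ≤ n → u n ≤ K * (n : ℝ) ^ e * log (1 + n) ^ g) :
    Summable fun n => u (n + 1) ^ 2 := by
  have hsum := ((summable_nat_add_iff 1).mpr
    (summable_rpow_mul_log_one_add_rpow he (by positivity : 0 ≤ 2 * g))).mul_left (K ^ 2)
  refine .of_nonneg_of_le (fun n => sq_nonneg _) (fun n => ?_) hsum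
  have hn0 : (0 : ℝ) ≤ ((n + 1 : ℕ) : ℝ) := by positivity
  have hL : 0 ≤ log (1 + ((n + 1 : ℕ) : ℝ)) := log_nonneg (le_add_of_nonneg_right hn0)
  calc u (n + 1) ^ 2
      ≤ (K * ((n + 1 : ℕ) : ℝ) ^ e * log (1 + ((n + 1 : ℕ) : ℝ)) ^ g) ^ 2 :=
        pow_le_pow_left₀ (hu0 _) (hu (n + 1) (by omega)) 2
    _ = _ := by
        rw [mul_pow, mul_pow, ← rpow_two (_ ^ e), ← rpow_two (_ ^ g), ← rpow_mul hn0,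
          ← rpow_mul hL, mul_comm e, mul_comm g]
        ring

section HolderSeminorm

variable {X : Type*} [PseudoMetricSpace X]

/-- Junk value `0` when `g` is not `c`-Hölder on `S` (`⨆` of an unbounded real family). -/
noncomputable def holderSeminorm (S : Set X) (c : ℝ) (g : X → ℝ) : ℝ :=
  ⨆ p : {p : X × X // p.1 ∈ S ∧ p.2 ∈ S ∧ p.1 ≠ p.2},
    |g p.1.1 - g p.1.2| / dist p.1.1 p.1.2 ^ c

theorem holderSeminorm_nonneg (S : Set X) (c : ℝ) (g : X → ℝ) : 0 ≤ holderSeminorm S c g :=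
  Real.iSup_nonneg fun _ => div_nonneg (abs_nonneg _) (rpow_nonneg dist_nonneg _)

theorem holderSeminorm_le {S : Set X} {c M : ℝ} {g : X → ℝ} (hM : 0 ≤ M)
    (h : ∀ s ∈ S, ∀ t ∈ S, |g s - g t| ≤ M * dist s t ^ c) : holderSeminorm S c g ≤ M :=
  Real.iSup_le (fun ⟨⟨s, t⟩, hs, ht, _⟩ =>
    div_le_of_le_mul₀ (rpow_nonneg dist_nonneg _) hM (h s hs t ht)) hM

theorem holderSeminorm_le_interpolation {S : Set X} {g : X → ℝ} {A B a ρ : ℝ}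
    (hA : 0 ≤ A) (hB : 0 ≤ B) (hρ0 : 0 ≤ ρ) (hρ1 : ρ ≤ 1)
    (hholder : ∀ s ∈ S, ∀ t ∈ S, |g s - g t| ≤ A * dist s t ^ a)
    (hbound : ∀ s ∈ S, |g s| ≤ B) :
    holderSeminorm S (a * ρ) g ≤ A ^ ρ * (2 * B) ^ (1 - ρ) := by
  refine holderSeminorm_le (by positivity) fun s hs t ht => ?_
  have hsup : |g s - g t| ≤ 2 * B :=
    (abs_sub _ _).trans (by linarith [hbound s hs, hbound t ht])
  calc |g s - g t| ≤ min (A * dist s t ^ a) (2 * B) := le_min (hholder s hs t ht) hsup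
    _ ≤ (A * dist s t ^ a) ^ ρ * (2 * B) ^ (1 - ρ) :=
        min_le_rpow_mul_rpow (by positivity) (by positivity) hρ0 hρ1
    _ = A ^ ρ * (2 * B) ^ (1 - ρ) * dist s t ^ (a * ρ) := by
        rw [mul_rpow hA (by positivity), ← rpow_mul dist_nonneg]; ring

end HolderSeminorm

theorem stmt1_general (d : ℕ) (T ϑ γ a b C₁ C₂ ρ : ℝ)
    (hϑ : 1/2 < ϑ) (hγ : 0 ≤ γ)
    (f : ℕ → EuclideanSpace ℝ (Fin d) → ℝ)
    (hbound : ∀ j : ℕ, 1 ≤ j → ∀ t ∈ cube d T,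
      |f j t| ≤ C₁ * (j:ℝ) ^ (-ϑ) * Real.log (1 + (j:ℝ)) ^ γ)
    (hholder : ∀ j : ℕ, 1 ≤ j → ∀ s ∈ cube d T, ∀ t ∈ cube d T,
      |f j s - f j t| ≤ C₂ * (j:ℝ) ^ b * dist s t ^ a)
    (hρ : 0 < ρ) (hρ1 : ρ ≤ 1)
    (hρ2 : b + ϑ ≤ 0 ∨ ρ < (ϑ - 1/2) / (b + ϑ)) :
    Summable (fun j : ℕ =>
      (⨆ p : {p : EuclideanSpace ℝ (Fin d) × EuclideanSpace ℝ (Fin d) //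
          p.1 ∈ cube d T ∧ p.2 ∈ cube d T ∧ p.1 ≠ p.2},
        |f (j+1) p.1.1 - f (j+1) p.1.2| / dist p.1.1 p.1.2 ^ (a * ρ)) ^ 2) := by
  set e := b * ρ - ϑ * (1 - ρ)
  set g := γ * (1 - ρ)
  set K := |C₂| ^ ρ * (2 * |C₁|) ^ (1 - ρ)
  have he : 2 * e < -1 := by
    rcases le_or_gt (b + ϑ) 0 with h | h
    · nlinarith [mul_nonpos_of_nonneg_of_nonpos hρ.le h]
    · have : ρ * (b + ϑ) < ϑ - 1/2 := (lt_div_iff₀ h).mp (hρ2.resolve_left h.not_ge)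
      linarith
  have hseminorm (n : ℕ) (hn : 1 ≤ n) :
      holderSeminorm (cube d T) (a * ρ) (f n) ≤ K * (n : ℝ) ^ e * log (1 + n) ^ g := by
    have hn0 : (0 : ℝ) < n := by exact_mod_cast hn
    have hL : 0 ≤ log (1 + (n : ℝ)) := log_nonneg (by linarith)
    calc holderSeminorm (cube d T) (a * ρ) (f n)
        ≤ (|C₂| * (n : ℝ) ^ b) ^ ρ
            * (2 * (|C₁| * (n : ℝ) ^ (-ϑ) * log (1 + n) ^ γ)) ^ (1 - ρ) :=
          holderSeminorm_le_interpolation (by positivity) (by positivity) hρ.le hρ1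
            (fun s hs t ht => (hholder n hn s hs t ht).trans (by gcongr; exact le_abs_self _))
            (fun s hs => (hbound n hn s hs).trans (by gcongr; exact le_abs_self _))
      _ = K * (n : ℝ) ^ e * log (1 + n) ^ g := by
          rw [← mul_assoc, ← mul_assoc, mul_rpow, mul_rpow, mul_rpow, ← rpow_mul hn0.le,
            ← rpow_mul hn0.le, ← rpow_mul hL, show e = b * ρ + -ϑ * (1 - ρ) by ring,
            rpow_add hn0]
          · ring
          all_goals positivity
  change Summable fun j => holderSeminorm (cube d T) (a * ρ) (f (j + 1)) ^ 2
  exact summable_sq_of_le_rpow_mul_log_rpow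
    (u := fun n => holderSeminorm (cube d T) (a * ρ) (f n)) he (by positivity)
    (fun n => holderSeminorm_nonneg _ _ (f n)) hseminorm

/-- under (A1) and (A2), for `0 < ρ ≤ 1` with `ρ < (ϑ-1/2)/(b+ϑ)₊`
(no constraint when `b+ϑ ≤ 0`), the squares of the `aρ`-Hölder seminorms of the `f_j`
are summable. -/
theorem stmt1 (d : ℕ) (T ϑ γ a b C₁ C₂ ρ : ℝ) (hT : 0 < T)
    (hϑ : 1/2 < ϑ) (hγ : 0 ≤ γ) (ha : 0 < a) (ha1 : a ≤ 1)
    (f : ℕ → EuclideanSpace ℝ (Fin d) → ℝ)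
    (hbound : ∀ j : ℕ, 1 ≤ j → ∀ t ∈ cube d T,
      |f j t| ≤ C₁ * (j:ℝ) ^ (-ϑ) * Real.log (1 + (j:ℝ)) ^ γ)
    (hholder : ∀ j : ℕ, 1 ≤ j → ∀ s ∈ cube d T, ∀ t ∈ cube d T,
      |f j s - f j t| ≤ C₂ * (j:ℝ) ^ b * dist s t ^ a)
    (hρ : 0 < ρ) (hρ1 : ρ ≤ 1)
    (hρ2 : b + ϑ ≤ 0 ∨ ρ < (ϑ - 1/2) / (b + ϑ)) :
    Summable (fun j : ℕ =>
      (⨆ p : {p : EuclideanSpace ℝ (Fin d) × EuclideanSpace ℝ (Fin d) //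
          p.1 ∈ cube d T ∧ p.2 ∈ cube d T ∧ p.1 ≠ p.2},
        |f (j+1) p.1.1 - f (j+1) p.1.2| / dist p.1.1 p.1.2 ^ (a * ρ)) ^ 2) :=
  stmt1_general d T ϑ γ a b C₁ C₂ ρ hϑ hγ f hbound hholder hρ hρ1 hρ2
end

section
/- Let ν₁ ≥ ⋯ ≥ ν_m > 0, N ≥ 1, and suppose N^{1/m} ν_m (∏_{k=1}^m ν_k)^{−1/m} ≥ 1. Define N_j = ⌊N^{1/m} ν_j (∏_{k=1}^m ν_k)^{−1/m}⌋ for j = 1,…,m. Then each N_j ≥ 1, ∏_{j=1}^m N_j ≤ N, and ∑_{j=1}^m ν_j / N_j ≤ 2 m N^{−1/m} (∏_{j=1}^m ν_j)^{1/m}. -/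
open Real

/-! Write `z_j = c ν_j` with `c = N^{1/m} (∏ ν_k)^{-1/m}`, so that `∏ z_j = N` and `ν_j / z_j = 1/c`
for every `j`. Rounding down only decreases the product, and since `z_j ≥ 1` it loses at most
half of each `z_j`, so every term `ν_j / ⌊z_j⌋` is at most `2/c`. -/

section Floor

variable {ι : Type*} {s : Finset ι}

theorem prod_natFloor_le_prod {z : ι → ℝ} (hz : ∀ i ∈ s, 0 ≤ z i) :
    ∏ i ∈ s, (⌊z i⌋₊ : ℝ) ≤ ∏ i ∈ s, z i :=
  Finset.prod_le_prod (fun _ _ => Nat.cast_nonneg _) fun i hi => Nat.floor_le (hz i hi)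

theorem div_natFloor_mul_le {c x : ℝ} (hc : 0 < c) (h : 1 ≤ c * x) :
    x / ⌊c * x⌋₊ ≤ 2 / c := by
  have hx : 0 < x := pos_of_mul_pos_right (one_pos.trans_le h) hc.le
  calc x / ⌊c * x⌋₊ ≤ x / (c * x / 2) :=
        div_le_div_of_nonneg_left hx.le (by positivity) (Nat.div_two_lt_floor h).le
    _ = 2 / c := by field_simp

theorem sum_div_natFloor_mul_le {c : ℝ} {ν : ι → ℝ} (hc : 0 < c) (h : ∀ i ∈ s, 1 ≤ c * ν i) :
    ∑ i ∈ s, ν i / ⌊c * ν i⌋₊ ≤ 2 * s.card / c := by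
  calc ∑ i ∈ s, ν i / ⌊c * ν i⌋₊ ≤ ∑ _i ∈ s, 2 / c :=
        Finset.sum_le_sum fun i hi => div_natFloor_mul_le hc (h i hi)
    _ = 2 * s.card / c := by rw [Finset.sum_const, nsmul_eq_mul]; ring

end Floor

theorem rpow_one_div_mul_rpow_neg_one_div_pow {a b : ℝ} (ha : 0 ≤ a) (hb : 0 ≤ b) {m : ℕ}
    (hm : m ≠ 0) : (a ^ (1 / (m : ℝ)) * b ^ (-(1 / (m : ℝ)))) ^ m = a / b := by
  rw [mul_pow, rpow_neg hb, inv_pow, one_div, rpow_inv_natCast_pow ha hm,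
    rpow_inv_natCast_pow hb hm, div_eq_mul_inv]

/-- integer bit allocation: with `z_j = N^{1/m} ν_j (∏ ν_k)^{-1/m} ≥ 1`
(guaranteed by `z_m ≥ 1`) and `N_j = ⌊z_j⌋`, one has `N_j ≥ 1`, `∏ N_j ≤ N`, and
`∑ ν_j / N_j ≤ 2 m N^{-1/m} (∏ ν_j)^{1/m}`. -/
theorem stmt7 (m : ℕ) (hm : 0 < m) (N : ℝ) (hN : 1 ≤ N) (ν : Fin m → ℝ)
    (hpos : ∀ j, 0 < ν j) (hmono : ∀ i j : Fin m, i ≤ j → ν j ≤ ν i)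
    (hfeas : 1 ≤ N ^ (1/(m:ℝ)) * ν ⟨m-1, Nat.sub_lt hm one_pos⟩ *
      (∏ k, ν k) ^ (-(1/(m:ℝ)))) :
    (∀ j : Fin m, 1 ≤ ⌊N ^ (1/(m:ℝ)) * ν j * (∏ k, ν k) ^ (-(1/(m:ℝ)))⌋₊) ∧
    (∏ j, (⌊N ^ (1/(m:ℝ)) * ν j * (∏ k, ν k) ^ (-(1/(m:ℝ)))⌋₊ : ℝ)) ≤ N ∧
    (∑ j, ν j / (⌊N ^ (1/(m:ℝ)) * ν j * (∏ k, ν k) ^ (-(1/(m:ℝ)))⌋₊ : ℝ)) ≤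
      2 * (m:ℝ) * N ^ (-(1/(m:ℝ))) * (∏ j, ν j) ^ (1/(m:ℝ)) := by
  set P := ∏ k, ν k
  set c := N ^ (1/(m:ℝ)) * P ^ (-(1/(m:ℝ))) with hc_def
  have hz (j : Fin m) : N ^ (1/(m:ℝ)) * ν j * P ^ (-(1/(m:ℝ))) = c * ν j := mul_right_comm ..
  simp only [hz] at hfeas ⊢
  have hN0 : 0 ≤ N := zero_le_one.trans hN
  have hP : 0 < P := Finset.prod_pos fun j _ => hpos j
  have hc : 0 < c := by positivity
  have hge_one (j : Fin m) : 1 ≤ c * ν j :=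
    hfeas.trans (mul_le_mul_of_nonneg_left (hmono j _ (Nat.le_sub_one_of_lt j.isLt)) hc.le)
  refine ⟨fun j => Nat.one_le_floor_iff _ |>.mpr (hge_one j), ?_, ?_⟩
  · calc ∏ j, (⌊c * ν j⌋₊ : ℝ) ≤ ∏ j, c * ν j :=
          prod_natFloor_le_prod fun j _ => zero_le_one.trans (hge_one j)
      _ = N := by
          rw [Finset.prod_mul_distrib, Finset.prod_const, Finset.card_univ, Fintype.card_fin,
            hc_def, rpow_one_div_mul_rpow_neg_one_div_pow hN0 hP.le hm.ne',
            div_mul_cancel₀ _ hP.ne']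
  · calc ∑ j, ν j / (⌊c * ν j⌋₊ : ℝ) ≤ 2 * (Finset.univ : Finset (Fin m)).card / c :=
          sum_div_natFloor_mul_le hc fun j _ => hge_one j
      _ = 2 * m * N ^ (-(1/(m:ℝ))) * P ^ (1/(m:ℝ)) := by
          rw [Finset.card_univ, Fintype.card_fin, hc_def, rpow_neg hN0, rpow_neg hP.le]
          field_simp
end

section
/- For i ∈ {1,…,d}, let (f_j^i)_{j≥1} ⊂ C([0,T]) satisfy ‖f_j^i‖ ≤ C₁ j^{−ϑ_i} and [f_j^i]_{a_i} ≤ C₂ j^{b_i} with ϑ_i > 1/2, a_i ∈ (0,1], b_i ∈ ℝ. Then a nonincreasing (by the bound ∏ j_i^{−ϑ_i}) arrangement (f_k) of the tensor products f_{j⃗} = ⊗_{i=1}^d f_{j_i}^i on [0,T]^d satisfies ‖f_k‖ ≤ C k^{−ϑ} (log k)^{ϑ(m−1)} and [f_k]_a ≤ C k^b, where ϑ = min_i ϑ_i, m = #{i : ϑ_i = ϑ}, a = min_i a_i, b = (max_i b_i)_+. -/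
/-!
Write `g v = ∏ i, v i ^ (-ϑ i)`. Since `ψ` lists `ℕ_{≥1}^d` with `g` nonincreasing, the points
`ψ 1, …, ψ k` all lie in the weighted hyperbolic cross `{v | ∏ i, v i ^ ϑ i ≤ R}` with
`R = (g (ψ k))⁻¹`. That cross has `O(R ^ ϑ⁻¹ (1 + log R) ^ (m - 1))` lattice points: by induction on
the dimension, summing over the first coordinate `j`, one gets a convergent series `∑ j ^ (-ϑ₁/ϑ)`
when `ϑ₁ > ϑ`, and a harmonic sum, hence one more factor `log R`, when `ϑ₁ = ϑ`. As moreover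
`ψ k i ≤ k`, `log R = O(log k)`, and inverting `k ≲ R ^ ϑ⁻¹ (log k) ^ (m - 1)` bounds `g (ψ k)`,
hence the sup norm of `f_k`. The Hölder bound follows by telescoping the product, using
`|f^i_j| ≤ C₁` and `(ψ k i) ^ (b i) ≤ k ^ b`.
-/

open Real Finset

lemma sum_Icc_inv_le_one_add_log (J : ℕ) : ∑ j ∈ Icc 1 J, (j : ℝ)⁻¹ ≤ 1 + log J := by
  simpa only [harmonic_eq_sum_Icc, Rat.cast_sum, Rat.cast_inv, Rat.cast_natCast]
    using harmonic_le_one_add_log J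

lemma sub_one_rpow_le {x q : ℝ} (hx : 1 ≤ x) (hq0 : 0 ≤ q) (hq1 : q ≤ 1) :
    (x - 1) ^ q ≤ x ^ q - q * x ^ (q - 1) := by
  have hx0 : 0 < x := by linarith
  have hs : -1 ≤ -x⁻¹ := neg_le_neg (inv_le_one_of_one_le₀ hx)
  calc (x - 1) ^ q = x ^ q * (1 + -x⁻¹) ^ q := by
        rw [← mul_rpow hx0.le (by linarith), mul_add, mul_neg, mul_inv_cancel₀ hx0.ne']; ring_nf
    _ ≤ x ^ q * (1 + q * -x⁻¹) := by
        gcongr; exact rpow_one_add_le_one_add_mul_self hs hq0 hq1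
    _ = x ^ q - q * x ^ (q - 1) := by rw [rpow_sub_one hx0.ne']; ring

lemma sum_Icc_rpow_neg_le {p : ℝ} (hp0 : 0 < p) (hp1 : p < 1) (J : ℕ) :
    ∑ j ∈ Icc 1 J, (j : ℝ) ^ (-p) ≤ (J : ℝ) ^ (1 - p) / (1 - p) := by
  induction J with
  | zero => simp [zero_rpow (by linarith : (1:ℝ) - p ≠ 0)]
  | succ J ih =>
    rw [sum_Icc_succ_top (by omega)]
    have key :=
      sub_one_rpow_le (x := (J + 1 : ℕ)) (q := 1 - p) (by simp) (by linarith) (by linarith)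
    rw [Nat.cast_add_one, add_sub_cancel_right, sub_sub_cancel_left] at key
    rw [le_div_iff₀ (by linarith)] at ih ⊢
    push_cast
    nlinarith

section HyperbolicCross

variable {ι : Type*} [Fintype ι]

def hyperbolicCross (θ : ι → ℝ) (R : ℝ) : Set (ι → ℕ) :=
  {v | (∀ i, 1 ≤ v i) ∧ ∏ i, (v i : ℝ) ^ θ i ≤ R}

/-- Quantifying over finite subsets spares a proof that the cross is finite. -/
def CrossCardLE (θ : ι → ℝ) (B : ℝ → ℝ) : Prop :=
  ∀ R, 1 ≤ R → ∀ F : Finset (ι → ℕ), ↑F ⊆ hyperbolicCross θ R → (#F : ℝ) ≤ B R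

lemma one_le_prod_rpow {v : ι → ℕ} {θ : ι → ℝ} (hv : ∀ i, 1 ≤ v i) (hθ : ∀ i, 0 ≤ θ i) :
    1 ≤ ∏ i, (v i : ℝ) ^ θ i :=
  one_le_prod fun i _ => one_le_rpow (by exact_mod_cast hv i) (hθ i)

lemma one_le_of_mem_hyperbolicCross {θ : ι → ℝ} {R : ℝ} {v : ι → ℕ} (hθ : ∀ i, 0 ≤ θ i)
    (hv : v ∈ hyperbolicCross θ R) : 1 ≤ R :=
  (one_le_prod_rpow hv.1 hθ).trans hv.2

lemma CrossCardLE.nonneg {θ : ι → ℝ} {B : ℝ → ℝ} (h : CrossCardLE θ B) {R : ℝ} (hR : 1 ≤ R) :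
    0 ≤ B R := by
  simpa using h R hR ∅ (by simp)

lemma CrossCardLE.mono {θ : ι → ℝ} {B B' : ℝ → ℝ} (h : CrossCardLE θ B)
    (hB : ∀ R, 1 ≤ R → B R ≤ B' R) : CrossCardLE θ B' :=
  fun R hR F hF => (h R hR F hF).trans (hB R hR)

end HyperbolicCross

section Fibers

variable {n : ℕ} {θ : Fin (n + 1) → ℝ} {A σ : ℝ} {k : ℕ}

lemma mem_hyperbolicCross_iff_tail {R : ℝ} {v : Fin (n + 1) → ℕ} (hv : 1 ≤ v 0) :
    v ∈ hyperbolicCross θ R ↔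
      Fin.tail v ∈ hyperbolicCross (Fin.tail θ) (R / (v 0 : ℝ) ^ θ 0) := by
  have hpos : 0 < (v 0 : ℝ) ^ θ 0 := rpow_pos_of_pos (by exact_mod_cast hv) _
  simp only [hyperbolicCross, Set.mem_ofPred_eq, Fin.forall_fin_succ, Fin.prod_univ_succ,
    le_div_iff₀ hpos, Fin.tail, hv, true_and, mul_comm]

lemma card_le_sum_fibers (hθ : ∀ i, 0 < θ i) {R : ℝ} (hR : 0 < R) (g : ℕ → ℝ)
    (hg : ∀ j : ℕ, 1 ≤ j → ∀ G : Finset (Fin n → ℕ),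
      ↑G ⊆ hyperbolicCross (Fin.tail θ) (R / (j : ℝ) ^ θ 0) → (#G : ℝ) ≤ g j)
    {F : Finset (Fin (n + 1) → ℕ)} (hF : ↑F ⊆ hyperbolicCross θ R) :
    (#F : ℝ) ≤ ∑ j ∈ Icc 1 ⌊R ^ (θ 0)⁻¹⌋₊, g j := by
  have hfiber : ∀ v ∈ F, v 0 ∈ Icc 1 ⌊R ^ (θ 0)⁻¹⌋₊ := by
    intro v hv
    have hv0 := (hF hv).1 0
    have hpos : 0 < (v 0 : ℝ) ^ θ 0 := rpow_pos_of_pos (by exact_mod_cast hv0) _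
    have hle : (v 0 : ℝ) ^ θ 0 ≤ R := by
      have := one_le_of_mem_hyperbolicCross (fun i => (hθ _).le)
        ((mem_hyperbolicCross_iff_tail hv0).1 (hF hv))
      rwa [one_le_div hpos] at this
    refine mem_Icc.2 ⟨hv0, Nat.le_floor ?_⟩
    exact (le_rpow_inv_iff_of_pos (Nat.cast_nonneg _) hR.le (hθ 0)).2 hle
  rw [card_eq_sum_card_fiberwise hfiber]
  push_cast
  refine sum_le_sum fun j hj => ?_
  have hinj : Set.InjOn Fin.tail (↑(F.filter fun v => v 0 = j) : Set (Fin (n + 1) → ℕ)) := by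
    intro v hv w hw hvw
    rw [← Fin.cons_self_tail v, ← Fin.cons_self_tail w, hvw,
      (mem_filter.1 hv).2, (mem_filter.1 hw).2]
  rw [← card_image_of_injOn hinj]
  refine hg j (mem_Icc.1 hj).1 _ fun u hu => ?_
  obtain ⟨v, hv, rfl⟩ := mem_image.1 hu
  obtain ⟨hvF, rfl⟩ := mem_filter.1 hv
  exact (mem_hyperbolicCross_iff_tail ((hF hvF).1 0)).1 (hF hvF)

lemma CrossCardLE.of_tail (hθ : ∀ i, 0 < θ i)
    (h : CrossCardLE (Fin.tail θ) fun R => A * R ^ σ⁻¹ * (1 + log R) ^ k) :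
    CrossCardLE θ fun R => A * R ^ σ⁻¹ * (1 + log R) ^ k *
      ∑ j ∈ Icc 1 ⌊R ^ (θ 0)⁻¹⌋₊, (j : ℝ) ^ (-(θ 0 / σ)) := by
  have hA : 0 ≤ A := by simpa using h.nonneg le_rfl
  intro R hR F hF
  have hR0 : 0 < R := by linarith
  beta_reduce
  rw [mul_sum]
  refine card_le_sum_fibers hθ hR0 _ (fun j hj G hG => ?_) hF
  have hj0 : (0 : ℝ) < j := by exact_mod_cast hj
  have hjt : 1 ≤ (j : ℝ) ^ θ 0 := one_le_rpow (by exact_mod_cast hj) (hθ 0).le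
  obtain rfl | ⟨u, hu⟩ := G.eq_empty_or_nonempty
  · simp only [card_empty, Nat.cast_zero]
    have : 0 ≤ 1 + log R := by linarith [log_nonneg hR]
    positivity
  have hR'1 := one_le_of_mem_hyperbolicCross (fun i => (hθ _).le) (hG hu)
  calc (#G : ℝ)
      ≤ A * (R / (j : ℝ) ^ θ 0) ^ σ⁻¹ * (1 + log (R / (j : ℝ) ^ θ 0)) ^ k := h _ hR'1 G hG
    _ ≤ A * (R / (j : ℝ) ^ θ 0) ^ σ⁻¹ * (1 + log R) ^ k := by
        gcongr
        · linarith [log_nonneg hR'1]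
        · exact div_le_self hR0.le hjt
    _ = A * R ^ σ⁻¹ * (1 + log R) ^ k * (j : ℝ) ^ (-(θ 0 / σ)) := by
        rw [div_rpow hR0.le (by positivity), ← rpow_mul hj0.le, rpow_neg hj0.le, div_eq_mul_inv,
          div_eq_mul_inv]
        ring

lemma CrossCardLE.of_tail_of_lt (hθ : ∀ i, 0 < θ i) (hσ : 0 < σ) (hlt : σ < θ 0)
    (h : CrossCardLE (Fin.tail θ) fun R => A * R ^ σ⁻¹ * (1 + log R) ^ k) :
    ∃ A', CrossCardLE θ fun R => A' * R ^ σ⁻¹ * (1 + log R) ^ k := by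
  have hA : 0 ≤ A := by simpa using h.nonneg le_rfl
  have hsum : Summable fun j : ℕ => (j : ℝ) ^ (-(θ 0 / σ)) :=
    summable_nat_rpow.2 (neg_lt_neg ((one_lt_div hσ).2 hlt))
  refine ⟨A * ∑' j : ℕ, (j : ℝ) ^ (-(θ 0 / σ)), (h.of_tail hθ).mono fun R hR => ?_⟩
  have : 0 ≤ 1 + log R := by linarith [log_nonneg hR]
  calc A * R ^ σ⁻¹ * (1 + log R) ^ k * ∑ j ∈ Icc 1 ⌊R ^ (θ 0)⁻¹⌋₊, (j : ℝ) ^ (-(θ 0 / σ))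
      ≤ A * R ^ σ⁻¹ * (1 + log R) ^ k * ∑' j : ℕ, (j : ℝ) ^ (-(θ 0 / σ)) := by
        gcongr
        exact hsum.sum_le_tsum _ fun j _ => rpow_nonneg (Nat.cast_nonneg j) _
    _ = A * (∑' j : ℕ, (j : ℝ) ^ (-(θ 0 / σ))) * R ^ σ⁻¹ * (1 + log R) ^ k := by ring

lemma CrossCardLE.of_tail_of_eq (hθ : ∀ i, 0 < θ i) (hσ : 0 < σ) (heq : θ 0 = σ)
    (h : CrossCardLE (Fin.tail θ) fun R => A * R ^ σ⁻¹ * (1 + log R) ^ k) :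
    ∃ A', CrossCardLE θ fun R => A' * R ^ σ⁻¹ * (1 + log R) ^ (k + 1) := by
  have hA : 0 ≤ A := by simpa using h.nonneg le_rfl
  refine ⟨A * max 1 σ⁻¹, (h.of_tail hθ).mono fun R hR => ?_⟩
  have hlog : 0 ≤ log R := log_nonneg hR
  have hx : 1 ≤ R ^ σ⁻¹ := one_le_rpow hR (inv_nonneg.2 hσ.le)
  have hharm : ∑ j ∈ Icc 1 ⌊R ^ σ⁻¹⌋₊, (j : ℝ) ^ (-(σ / σ)) ≤ max 1 σ⁻¹ * (1 + log R) := by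
    simp only [div_self hσ.ne', rpow_neg_one]
    have hfloor : log ⌊R ^ σ⁻¹⌋₊ ≤ σ⁻¹ * log R := by
      rw [← log_rpow (by linarith)]
      exact log_le_log (by exact_mod_cast Nat.floor_pos.2 hx) (Nat.floor_le (by linarith))
    calc ∑ j ∈ Icc 1 ⌊R ^ σ⁻¹⌋₊, (j : ℝ)⁻¹ ≤ 1 + σ⁻¹ * log R :=
          (sum_Icc_inv_le_one_add_log _).trans (by linarith)
      _ ≤ max 1 σ⁻¹ * 1 + max 1 σ⁻¹ * log R := by gcongr <;> simp
      _ = max 1 σ⁻¹ * (1 + log R) := by ring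
  rw [heq]
  calc A * R ^ σ⁻¹ * (1 + log R) ^ k * ∑ j ∈ Icc 1 ⌊R ^ σ⁻¹⌋₊, (j : ℝ) ^ (-(σ / σ))
      ≤ A * R ^ σ⁻¹ * (1 + log R) ^ k * (max 1 σ⁻¹ * (1 + log R)) := by gcongr
    _ = A * max 1 σ⁻¹ * R ^ σ⁻¹ * (1 + log R) ^ (k + 1) := by ring

lemma CrossCardLE.of_tail_of_eq_of_lt (hθ : ∀ i, 0 < θ i) {τ : ℝ} (hσ : 0 < σ) (heq : θ 0 = σ)
    (hστ : σ < τ)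
    (h : CrossCardLE (Fin.tail θ) fun R => A * R ^ τ⁻¹ * (1 + log R) ^ 0) :
    ∃ A', CrossCardLE θ fun R => A' * R ^ σ⁻¹ * (1 + log R) ^ 0 := by
  have hA : 0 ≤ A := by simpa using h.nonneg le_rfl
  set p := σ / τ with hp
  have hτ : 0 < τ := hσ.trans hστ
  have hp0 : 0 < p := div_pos hσ hτ
  have hp1 : p < 1 := (div_lt_one hτ).2 hστ
  refine ⟨A / (1 - p), (h.of_tail hθ).mono fun R hR => ?_⟩
  have hR0 : 0 < R := by linarith
  have hsum : ∑ j ∈ Icc 1 ⌊R ^ σ⁻¹⌋₊, (j : ℝ) ^ (-p) ≤ (R ^ σ⁻¹) ^ (1 - p) / (1 - p) := by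
    refine (sum_Icc_rpow_neg_le hp0 hp1 _).trans ?_
    gcongr
    exact Nat.floor_le (by positivity)
  have hexp : R ^ τ⁻¹ * (R ^ σ⁻¹) ^ (1 - p) = R ^ σ⁻¹ := by
    rw [← rpow_mul hR0.le, ← rpow_add hR0]
    congr 1
    rw [hp]
    field_simp
    ring
  rw [heq]
  calc A * R ^ τ⁻¹ * (1 + log R) ^ 0 * ∑ j ∈ Icc 1 ⌊R ^ σ⁻¹⌋₊, (j : ℝ) ^ (-p)
      ≤ A * R ^ τ⁻¹ * (1 + log R) ^ 0 * ((R ^ σ⁻¹) ^ (1 - p) / (1 - p)) := by gcongr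
    _ = A / (1 - p) * (R ^ τ⁻¹ * (R ^ σ⁻¹) ^ (1 - p)) * (1 + log R) ^ 0 := by ring
    _ = A / (1 - p) * R ^ σ⁻¹ * (1 + log R) ^ 0 := by rw [hexp]

end Fibers

open Filter Topology in
lemma exists_between_forall_lt {ι : Type*} [Finite ι] {f : ι → ℝ} {σ : ℝ}
    (h : ∀ i, σ < f i) : ∃ τ, σ < τ ∧ ∀ i, τ < f i :=
  ((eventually_mem_nhdsWithin (a := σ) (s := Set.Ioi σ)).and (eventually_all.2 fun i =>
    eventually_nhdsWithin_of_eventually_nhds (eventually_lt_nhds (h i)))).exists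

theorem exists_crossCardLE {n : ℕ} (θ : Fin n → ℝ) {σ : ℝ} (hσ : 0 < σ) (hθ : ∀ i, σ ≤ θ i) :
    ∃ A, CrossCardLE θ fun R => A * R ^ σ⁻¹ * (1 + log R) ^ (#{i | θ i = σ} - 1) := by
  induction n generalizing σ with
  | zero =>
    refine ⟨1, fun R hR F _ => ?_⟩
    have hF : #F ≤ 1 := card_le_one.2 fun v _ w _ => Subsingleton.elim v w
    simp only [univ_eq_empty, filter_empty, card_empty, zero_tsub, pow_zero, mul_one, one_mul]
    exact (Nat.cast_le_one.2 hF).trans (one_le_rpow hR (inv_nonneg.2 hσ.le))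
  | succ n ih =>
    have hθpos : ∀ i, 0 < θ i := fun i => hσ.trans_le (hθ i)
    have hcard := Fin.card_filter_univ_succ' (fun i => θ i = σ)
    obtain hlt | heq := (hθ 0).lt_or_eq
    · obtain ⟨A, hA⟩ := ih (Fin.tail θ) hσ fun i => hθ _
      rw [hcard, if_neg hlt.ne', zero_add]
      exact hA.of_tail_of_lt hθpos hσ hlt
    by_cases hm : #{i : Fin n | θ i.succ = σ} = 0
    -- `θ 0` is the only minimal weight: the induction hypothesis at level `σ` would cost a
    -- superfluous `log`, so the tail is counted at a slightly larger level `τ` instead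
    · have hgt : ∀ i, σ < Fin.tail θ i := fun i => (hθ i.succ).lt_of_ne fun h =>
        notMem_empty i (card_eq_zero.1 hm ▸ mem_filter.2 ⟨mem_univ i, h.symm⟩)
      obtain ⟨τ, hστ, hτ⟩ := exists_between_forall_lt hgt
      obtain ⟨A, hA⟩ := ih (Fin.tail θ) (hσ.trans hστ) fun i => (hτ i).le
      rw [filter_false_of_mem fun i _ => (hτ i).ne', card_empty] at hA
      rw [hcard, if_pos heq.symm, hm]
      exact hA.of_tail_of_eq_of_lt hθpos hσ heq.symm hστ
    · obtain ⟨A, hA⟩ := ih (Fin.tail θ) hσ fun i => hθ _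
      rw [hcard, if_pos heq.symm, show 1 + #{i : Fin n | θ i.succ = σ} - 1 =
        #{i : Fin n | θ i.succ = σ} - 1 + 1 by omega]
      exact hA.of_tail_of_eq hθpos hσ heq.symm

section Weights

variable {ι : Type*} [Fintype ι] {θ : ι → ℝ}

lemma prod_rpow_neg_eq_inv (v : ι → ℕ) :
    ∏ i, (v i : ℝ) ^ (-θ i) = (∏ i, (v i : ℝ) ^ θ i)⁻¹ := by
  simp only [rpow_neg (Nat.cast_nonneg _), prod_inv_distrib]

lemma prod_rpow_neg_le_rpow_neg [DecidableEq ι] {v : ι → ℕ} (hv : ∀ i, 1 ≤ v i)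
    (hθ : ∀ i, 0 ≤ θ i) (i : ι) : ∏ l, (v l : ℝ) ^ (-θ l) ≤ (v i : ℝ) ^ (-θ i) := by
  have hv' : ∀ l, (1 : ℝ) ≤ v l := fun l => by exact_mod_cast hv l
  rw [← mul_prod_erase _ _ (mem_univ i)]
  exact mul_le_of_le_one_right (by positivity) (prod_le_one (fun l _ => by positivity)
    fun l _ => rpow_le_one_of_one_le_of_nonpos (hv' l) (neg_nonpos.2 (hθ l)))

lemma one_add_log_prod_rpow_le {v : ι → ℕ} {k : ℕ} (hk : 2 ≤ k) (hv : ∀ i, 1 ≤ v i)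
    (hvk : ∀ i, v i ≤ k) (hθ : ∀ i, 0 ≤ θ i) :
    1 + log (∏ i, (v i : ℝ) ^ θ i) ≤ ((log 2)⁻¹ + ∑ i, θ i) * log k := by
  have hk0 : (0 : ℝ) < k := by positivity
  have hlog2 : 0 < log 2 := log_pos one_lt_two
  have hprod : ∏ i, (v i : ℝ) ^ θ i ≤ (k : ℝ) ^ ∑ i, θ i := by
    rw [rpow_sum_of_pos hk0]
    exact prod_le_prod (fun i _ => by positivity)
      fun i _ => rpow_le_rpow (Nat.cast_nonneg _) (by exact_mod_cast hvk i) (hθ i)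
  have h1 : 1 ≤ (log 2)⁻¹ * log k := by
    rw [inv_mul_eq_div, one_le_div hlog2]
    exact log_le_log two_pos (by exact_mod_cast hk)
  have h2 : log (∏ i, (v i : ℝ) ^ θ i) ≤ (∑ i, θ i) * log k := by
    rw [← log_rpow hk0]
    exact log_le_log (zero_lt_one.trans_le (one_le_prod_rpow hv hθ)) hprod
  linarith

end Weights

lemma inv_le_rpow_mul_rpow_neg {x y c σ : ℝ} (hσ : 0 < σ) (hx : 0 < x) (hy : 0 < y)
    (h : y ≤ c * x ^ σ⁻¹) : x⁻¹ ≤ c ^ σ * y ^ (-σ) := by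
  have hc : 0 < c := pos_of_mul_pos_left (hy.trans_le h) (by positivity)
  have hyx : (y / c) ^ σ ≤ x := by
    have := rpow_le_rpow (div_pos hy hc).le ((div_le_iff₀' hc).2 h) hσ.le
    rwa [← rpow_mul hx.le, inv_mul_cancel₀ hσ.ne', rpow_one] at this
  calc x⁻¹ ≤ ((y / c) ^ σ)⁻¹ := inv_anti₀ (by positivity) hyx
    _ = c ^ σ * y ^ (-σ) := by
        rw [div_rpow hy.le hc.le, rpow_neg hy.le]
        field_simp

section Arrangement

variable {d : ℕ} {θ : Fin d → ℝ} {ψ : ℕ → Fin d → ℕ}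

lemma arrangement_apply_le (hθ : ∀ i, 0 < θ i) (hpos : ∀ k, 1 ≤ k → ∀ i, 1 ≤ ψ k i)
    (hsurj : ∀ v : Fin d → ℕ, (∀ i, 1 ≤ v i) → ∃ k, 1 ≤ k ∧ ψ k = v)
    (hmono : ∀ k l, 1 ≤ k → k ≤ l → ∏ i, (ψ l i : ℝ) ^ (-θ i) ≤ ∏ i, (ψ k i : ℝ) ^ (-θ i))
    {k : ℕ} (hk : 1 ≤ k) (i : Fin d) : ψ k i ≤ k := by
  classical
  let e : ℕ → Fin d → ℕ := fun j => Function.update 1 i j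
  have he : Function.Injective e := fun j j' h => by
    simpa [e] using congrFun h i
  have hcard : #((Icc 1 (k - 1)).image ψ) < #((Icc 1 k).image e) := by
    rw [card_image_of_injective _ he]
    exact card_image_le.trans_lt (by simp; omega)
  -- some `e j` with `j ≤ k` is not among `ψ 1, …, ψ (k - 1)`, so it sits at a position `l ≥ k`
  obtain ⟨_, hv, hvψ⟩ := exists_mem_notMem_of_card_lt_card hcard
  obtain ⟨j, hj, rfl⟩ := mem_image.1 hv
  obtain ⟨hj1, hjk⟩ := mem_Icc.1 hj
  obtain ⟨l, hl, hψl⟩ := hsurj (e j) fun p => by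
    by_cases hp : p = i <;> simp [e, hp, hj1]
  have hkl : k ≤ l := by
    by_contra! hlk
    exact hvψ (mem_image.2 ⟨l, mem_Icc.2 ⟨hl, by omega⟩, hψl⟩)
  have hweight : ∏ p, (e j p : ℝ) ^ (-θ p) = (j : ℝ) ^ (-θ i) := by
    rw [prod_eq_single i (fun p _ hp => by simp [e, hp]) (by simp)]
    simp [e]
  have hψk : (1 : ℝ) ≤ ψ k i := by exact_mod_cast hpos k hk i
  have : (k : ℝ) ^ (-θ i) ≤ (ψ k i : ℝ) ^ (-θ i) :=
    calc (k : ℝ) ^ (-θ i) ≤ (j : ℝ) ^ (-θ i) :=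
          rpow_le_rpow_of_nonpos (by exact_mod_cast hj1) (by exact_mod_cast hjk)
            (neg_nonpos.2 (hθ i).le)
      _ = ∏ p, (ψ l p : ℝ) ^ (-θ p) := by rw [hψl, hweight]
      _ ≤ ∏ p, (ψ k p : ℝ) ^ (-θ p) := hmono k l hk hkl
      _ ≤ (ψ k i : ℝ) ^ (-θ i) := prod_rpow_neg_le_rpow_neg (hpos k hk) (fun p => (hθ p).le) i
  exact_mod_cast (rpow_le_rpow_iff_of_neg (by exact_mod_cast hk) (by linarith)
    (neg_neg_of_pos (hθ i))).1 this

lemma CrossCardLE.le_of_arrangement {B : ℝ → ℝ} (h : CrossCardLE θ B) (hθ : ∀ i, 0 ≤ θ i)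
    (hpos : ∀ k, 1 ≤ k → ∀ i, 1 ≤ ψ k i) (hinj : ∀ k l, 1 ≤ k → 1 ≤ l → ψ k = ψ l → k = l)
    (hmono : ∀ k l, 1 ≤ k → k ≤ l → ∏ i, (ψ l i : ℝ) ^ (-θ i) ≤ ∏ i, (ψ k i : ℝ) ^ (-θ i))
    {k : ℕ} (hk : 1 ≤ k) : (k : ℝ) ≤ B (∏ i, (ψ k i : ℝ) ^ θ i) := by
  have hinjOn : Set.InjOn ψ (Icc 1 k) := fun x hx y hy =>
    hinj x y (mem_Icc.1 hx).1 (mem_Icc.1 hy).1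
  have hcard : #((Icc 1 k).image ψ) = k := by
    rw [card_image_of_injOn hinjOn, Nat.card_Icc, Nat.add_sub_cancel]
  have hsub : ↑((Icc 1 k).image ψ) ⊆ hyperbolicCross θ (∏ i, (ψ k i : ℝ) ^ θ i) := by
    intro v hv
    obtain ⟨l, hl, rfl⟩ := mem_image.1 hv
    obtain ⟨hl1, hlk⟩ := mem_Icc.1 hl
    refine ⟨hpos l hl1, ?_⟩
    have := hmono l k hl1 hlk
    rw [prod_rpow_neg_eq_inv, prod_rpow_neg_eq_inv] at this
    exact (inv_le_inv₀ (zero_lt_one.trans_le (one_le_prod_rpow (hpos k hk) hθ))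
      (zero_lt_one.trans_le (one_le_prod_rpow (hpos l hl1) hθ))).1 this
  simpa only [hcard] using h _ (one_le_prod_rpow (hpos k hk) hθ) _ hsub

theorem prod_arrangement_rpow_neg_le (hθ : ∀ i, 0 < θ i) {σ : ℝ} (hσ : IsLeast (Set.range θ) σ)
    (hpos : ∀ k, 1 ≤ k → ∀ i, 1 ≤ ψ k i) (hinj : ∀ k l, 1 ≤ k → 1 ≤ l → ψ k = ψ l → k = l)
    (hsurj : ∀ v : Fin d → ℕ, (∀ i, 1 ≤ v i) → ∃ k, 1 ≤ k ∧ ψ k = v)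
    (hmono : ∀ k l, 1 ≤ k → k ≤ l → ∏ i, (ψ l i : ℝ) ^ (-θ i) ≤ ∏ i, (ψ k i : ℝ) ^ (-θ i)) :
    ∃ C, ∀ k, 2 ≤ k → ∏ i, (ψ k i : ℝ) ^ (-θ i) ≤
      C * (k : ℝ) ^ (-σ) * log k ^ (σ * ((#{i | θ i = σ} : ℝ) - 1)) := by
  obtain ⟨i₀, hi₀⟩ := hσ.1
  have hσ0 : 0 < σ := hi₀ ▸ hθ i₀
  have hθ0 : ∀ i, 0 ≤ θ i := fun i => (hθ i).le
  set m := #{i | θ i = σ}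
  have hm : 1 ≤ m := card_pos.2 ⟨i₀, by simp [hi₀]⟩
  obtain ⟨A, hA⟩ := exists_crossCardLE θ hσ0 fun i => hσ.2 ⟨i, rfl⟩
  have hA0 : 0 ≤ A := by simpa using hA.nonneg le_rfl
  set c := (log 2)⁻¹ + ∑ i, θ i
  have hc : 0 ≤ c :=
    add_nonneg (inv_nonneg.2 (log_nonneg one_le_two)) (sum_nonneg fun i _ => hθ0 i)
  refine ⟨(A * c ^ (m - 1)) ^ σ, fun k hk => ?_⟩
  set R := ∏ i, (ψ k i : ℝ) ^ θ i
  have hk1 : 1 ≤ k := by omega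
  have hR : 1 ≤ R := one_le_prod_rpow (hpos k hk1) hθ0
  have hlogk : 0 < log k := log_pos (by exact_mod_cast hk)
  have hlogR : 1 + log R ≤ c * log k := one_add_log_prod_rpow_le hk (hpos k hk1)
    (arrangement_apply_le hθ hpos hsurj hmono hk1) hθ0
  have hcount : (k : ℝ) ≤ A * c ^ (m - 1) * log k ^ (m - 1) * R ^ σ⁻¹ :=
    calc (k : ℝ) ≤ A * R ^ σ⁻¹ * (1 + log R) ^ (m - 1) :=
          hA.le_of_arrangement hθ0 hpos hinj hmono hk1
      _ ≤ A * R ^ σ⁻¹ * (c * log k) ^ (m - 1) := by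
          gcongr
          linarith [log_nonneg hR]
      _ = A * c ^ (m - 1) * log k ^ (m - 1) * R ^ σ⁻¹ := by rw [mul_pow]; ring
  rw [prod_rpow_neg_eq_inv]
  refine (inv_le_rpow_mul_rpow_neg hσ0 (by linarith) (by positivity) hcount).trans_eq ?_
  rw [mul_rpow (by positivity) (by positivity), ← rpow_natCast (log k), ← rpow_mul hlogk.le,
    Nat.cast_sub hm, Nat.cast_one, mul_comm _ σ]
  ring

end Arrangement

lemma abs_prod_le_abs_pow_mul_prod {ι : Type*} [Fintype ι] {u x : ι → ℝ} {C : ℝ}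
    (h : ∀ i, |u i| ≤ C * x i) (hx : ∀ i, 0 ≤ x i) :
    |∏ i, u i| ≤ |C| ^ Fintype.card ι * ∏ i, x i := by
  rw [abs_prod, ← card_univ, ← prod_const, ← prod_mul_distrib]
  exact prod_le_prod (fun i _ => abs_nonneg _)
    fun i _ => (h i).trans (mul_le_mul_of_nonneg_right (le_abs_self C) (hx i))

lemma abs_prod_sub_prod_le {ι : Type*} (s : Finset ι) {u w : ι → ℝ} {M : ℝ}
    (hu : ∀ i ∈ s, |u i| ≤ M) (hw : ∀ i ∈ s, |w i| ≤ M) :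
    |∏ i ∈ s, u i - ∏ i ∈ s, w i| ≤ M ^ (#s - 1) * ∑ i ∈ s, |u i - w i| := by
  obtain rfl | hs := s.eq_empty_or_nonempty
  · simp
  induction hs using Nonempty.cons_induction with
  | singleton a => simp
  | cons a s ha hs ih =>
    simp only [forall_mem_cons] at hu hw
    have hM : 0 ≤ M := (abs_nonneg _).trans hu.1
    have hQ : |∏ i ∈ s, w i| ≤ M ^ #s := by
      rw [abs_prod]
      exact (prod_le_prod (fun i _ => abs_nonneg _) hw.2).trans_eq (prod_const M)
    rw [prod_cons, prod_cons, sum_cons, card_cons, Nat.add_sub_cancel,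
      show u a * ∏ i ∈ s, u i - w a * ∏ i ∈ s, w i =
        u a * (∏ i ∈ s, u i - ∏ i ∈ s, w i) + (u a - w a) * ∏ i ∈ s, w i by ring]
    calc _ ≤ |u a| * |∏ i ∈ s, u i - ∏ i ∈ s, w i| + |u a - w a| * |∏ i ∈ s, w i| := by
          rw [← abs_mul, ← abs_mul]
          exact abs_add_le _ _
      _ ≤ M * (M ^ (#s - 1) * ∑ i ∈ s, |u i - w i|) + |u a - w a| * M ^ #s := by
          gcongr
          exacts [hu.1, ih hu.2 hw.2]
      _ = M ^ #s * (|u a - w a| + ∑ i ∈ s, |u i - w i|) := by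
          rw [← mul_assoc, ← pow_succ', Nat.sub_add_cancel hs.card_pos]
          ring

lemma rpow_le_max_one_mul_rpow {x δ D α a : ℝ} (hx : 0 ≤ x) (hxδ : x ≤ δ) (hδD : δ ≤ D)
    (ha : 0 < a) (haα : a ≤ α) (hα1 : α ≤ 1) : x ^ α ≤ max 1 D * δ ^ a := by
  have hδ : 0 ≤ δ := hx.trans hxδ
  refine (rpow_le_rpow hx hxδ (ha.le.trans haα)).trans ?_
  rcases le_total δ 1 with hδ1 | hδ1
  · calc δ ^ α ≤ δ ^ a := rpow_le_rpow_of_exponent_ge' hδ hδ1 ha.le haα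
      _ ≤ max 1 D * δ ^ a := le_mul_of_one_le_left (by positivity) (le_max_left _ _)
  · calc δ ^ α ≤ δ ^ (1 : ℝ) := rpow_le_rpow_of_exponent_le hδ1 hα1
      _ ≤ max 1 D := by rw [rpow_one]; exact hδD.trans (le_max_right _ _)
      _ ≤ max 1 D * δ ^ a := le_mul_of_one_le_right (by positivity) (one_le_rpow hδ1 ha.le)

lemma mul_rpow_le_max_mul_rpow {c x y β b : ℝ} (hx : 1 ≤ x) (hxy : x ≤ y) (hβ : β ≤ b)
    (hb : 0 ≤ b) : c * x ^ β ≤ max c 0 * y ^ b :=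
  calc c * x ^ β ≤ max c 0 * x ^ β := by gcongr; exact le_max_left _ _
    _ ≤ max c 0 * y ^ b := mul_le_mul_of_nonneg_left
        ((rpow_le_rpow_of_exponent_le hx hβ).trans (rpow_le_rpow (by linarith) hxy hb))
        (le_max_right _ _)

section Cube

variable {d : ℕ} {T : ℝ} {s t : EuclideanSpace ℝ (Fin d)}

lemma dist_le_of_mem_cube (hs : s ∈ cube d T) (ht : t ∈ cube d T) :
    dist s t ≤ √(d * T ^ 2) := by
  rw [EuclideanSpace.dist_eq]
  refine sqrt_le_sqrt ?_
  calc ∑ i, dist (s i) (t i) ^ 2 ≤ ∑ _i : Fin d, T ^ 2 := by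
        gcongr with i
        simpa using Real.dist_le_of_mem_Icc (hs i) (ht i)
    _ = d * T ^ 2 := by simp

lemma abs_prod_sub_prod_le_of_holder {M L a : ℝ} {α : Fin d → ℝ} {F : Fin d → ℝ → ℝ}
    (hF : ∀ i, ∀ x ∈ Set.Icc 0 T, |F i x| ≤ M)
    (hFL : ∀ i, ∀ x ∈ Set.Icc 0 T, ∀ y ∈ Set.Icc 0 T, |F i x - F i y| ≤ L * |x - y| ^ α i)
    (hL : 0 ≤ L) (ha : 0 < a) (haα : ∀ i, a ≤ α i) (hα1 : ∀ i, α i ≤ 1)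
    (hs : s ∈ cube d T) (ht : t ∈ cube d T) :
    |∏ i, F i (s i) - ∏ i, F i (t i)| ≤
      d * M ^ (d - 1) * L * max 1 √(d * T ^ 2) * dist s t ^ a := by
  have hM : 0 ≤ M ^ (d - 1) := by
    cases d with
    | zero => simp
    | succ n => exact pow_nonneg ((abs_nonneg _).trans (hF 0 _ (hs 0))) _
  have hterm : ∀ i, |F i (s i) - F i (t i)| ≤ L * (max 1 √(d * T ^ 2) * dist s t ^ a) := by
    intro i
    refine (hFL i _ (hs i) _ (ht i)).trans (mul_le_mul_of_nonneg_left ?_ hL)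
    refine rpow_le_max_one_mul_rpow (abs_nonneg _) ?_ (dist_le_of_mem_cube hs ht) ha (haα i)
      (hα1 i)
    simpa only [← Real.dist_eq] using PiLp.dist_apply_le s t i
  calc |∏ i, F i (s i) - ∏ i, F i (t i)|
      ≤ M ^ (d - 1) * ∑ i, |F i (s i) - F i (t i)| := by
        simpa using abs_prod_sub_prod_le univ (fun i _ => hF i _ (hs i)) fun i _ => hF i _ (ht i)
    _ ≤ M ^ (d - 1) * ∑ _i : Fin d, L * (max 1 √(d * T ^ 2) * dist s t ^ a) := by
        gcongr with i; exact hterm i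
    _ = d * M ^ (d - 1) * L * max 1 √(d * T ^ 2) * dist s t ^ a := by simp; ring

lemma abs_prod_sub_prod_le_of_decay_holder {C₁ C₂ a b : ℝ} {ϑ α β : Fin d → ℝ}
    {f : Fin d → ℕ → ℝ → ℝ}
    (hbound : ∀ i, ∀ j : ℕ, 1 ≤ j → ∀ x ∈ Set.Icc 0 T, |f i j x| ≤ C₁ * (j : ℝ) ^ (-ϑ i))
    (hholder : ∀ i, ∀ j : ℕ, 1 ≤ j → ∀ x ∈ Set.Icc 0 T, ∀ y ∈ Set.Icc 0 T,
      |f i j x - f i j y| ≤ C₂ * (j : ℝ) ^ β i * |x - y| ^ α i)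
    (hϑ : ∀ i, 0 ≤ ϑ i) (ha : 0 < a) (haα : ∀ i, a ≤ α i) (hα1 : ∀ i, α i ≤ 1)
    (hβ : ∀ i, β i ≤ b) (hb : 0 ≤ b) {k : ℕ} {v : Fin d → ℕ} (hv : ∀ i, 1 ≤ v i)
    (hvk : ∀ i, v i ≤ k) (hs : s ∈ cube d T) (ht : t ∈ cube d T) :
    |∏ i, f i (v i) (s i) - ∏ i, f i (v i) (t i)| ≤
      d * C₁ ^ (d - 1) * max C₂ 0 * max 1 √(d * T ^ 2) * k ^ b * dist s t ^ a := by
  have hv' : ∀ i, (1 : ℝ) ≤ v i := fun i => by exact_mod_cast hv i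
  have hF : ∀ i, ∀ x ∈ Set.Icc 0 T, |f i (v i) x| ≤ C₁ := fun i x hx => by
    have h := hbound i _ (hv i) x hx
    have hpos : 0 < (v i : ℝ) ^ (-ϑ i) := rpow_pos_of_pos (by linarith [hv' i]) _
    exact h.trans (mul_le_of_le_one_right (nonneg_of_mul_nonneg_left ((abs_nonneg _).trans h) hpos)
      (rpow_le_one_of_one_le_of_nonpos (hv' i) (neg_nonpos.2 (hϑ i))))
  have hFL : ∀ i, ∀ x ∈ Set.Icc 0 T, ∀ y ∈ Set.Icc 0 T,
      |f i (v i) x - f i (v i) y| ≤ max C₂ 0 * k ^ b * |x - y| ^ α i := fun i x hx y hy =>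
    (hholder i _ (hv i) x hx y hy).trans (mul_le_mul_of_nonneg_right
      (mul_rpow_le_max_mul_rpow (hv' i) (by exact_mod_cast hvk i) (hβ i) hb) (by positivity))
  calc _ ≤ d * C₁ ^ (d - 1) * (max C₂ 0 * k ^ b) * max 1 √(d * T ^ 2) * dist s t ^ a :=
        abs_prod_sub_prod_le_of_holder hF hFL (by positivity) ha haα hα1 hs ht
    _ = _ := by ring

end Cube

theorem stmt10_general (d : ℕ) (T : ℝ)
    (ϑi ai bi : Fin d → ℝ) (C₁ C₂ : ℝ)
    (hϑi : ∀ i, 1/2 < ϑi i) (hai : ∀ i, 0 < ai i) (hai1 : ∀ i, ai i ≤ 1)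
    (fi : Fin d → ℕ → ℝ → ℝ)
    (hboundi : ∀ i, ∀ j : ℕ, 1 ≤ j → ∀ t ∈ Set.Icc (0:ℝ) T,
      |fi i j t| ≤ C₁ * (j:ℝ) ^ (-(ϑi i)))
    (hholderi : ∀ i, ∀ j : ℕ, 1 ≤ j → ∀ s ∈ Set.Icc (0:ℝ) T, ∀ t ∈ Set.Icc (0:ℝ) T,
      |fi i j s - fi i j t| ≤ C₂ * (j:ℝ) ^ (bi i) * |s - t| ^ (ai i))
    (ϑ : ℝ) (hϑ : IsLeast (Set.range ϑi) ϑ)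
    (m : ℕ) (hm : m = (Finset.univ.filter (fun i => ϑi i = ϑ)).card)
    (a : ℝ) (ha : IsLeast (Set.range ai) a)
    (b : ℝ) (hb : IsGreatest (insert 0 (Set.range bi)) b)
    (ψ : ℕ → (Fin d → ℕ))
    (hψpos : ∀ k : ℕ, 1 ≤ k → ∀ i, 1 ≤ ψ k i)
    (hψinj : ∀ k l : ℕ, 1 ≤ k → 1 ≤ l → ψ k = ψ l → k = l)
    (hψsurj : ∀ v : Fin d → ℕ, (∀ i, 1 ≤ v i) → ∃ k : ℕ, 1 ≤ k ∧ ψ k = v)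
    (hψmono : ∀ k l : ℕ, 1 ≤ k → k ≤ l →
      (∏ i, (ψ l i : ℝ) ^ (-(ϑi i))) ≤ ∏ i, (ψ k i : ℝ) ^ (-(ϑi i))) :
    ∃ C : ℝ, ∀ k : ℕ, 2 ≤ k →
      (∀ t : EuclideanSpace ℝ (Fin d), t ∈ cube d T →
        |∏ i, fi i (ψ k i) (t i)| ≤ C * (k:ℝ) ^ (-ϑ) * Real.log k ^ (ϑ * ((m:ℝ) - 1))) ∧
      (∀ s : EuclideanSpace ℝ (Fin d), s ∈ cube d T →
       ∀ t : EuclideanSpace ℝ (Fin d), t ∈ cube d T →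
        |(∏ i, fi i (ψ k i) (s i)) - ∏ i, fi i (ψ k i) (t i)| ≤
          C * (k:ℝ) ^ b * dist s t ^ a) := by
  subst hm
  have hϑpos : ∀ i, 0 < ϑi i := fun i => by linarith [hϑi i]
  have ha0 : 0 < a := by obtain ⟨i, rfl⟩ := ha.1; exact hai i
  obtain ⟨C₀, hC₀⟩ := prod_arrangement_rpow_neg_le hϑpos hϑ hψpos hψinj hψsurj hψmono
  refine ⟨max (|C₁| ^ d * C₀) (d * C₁ ^ (d - 1) * max C₂ 0 * max 1 √(d * T ^ 2)),
    fun k hk => ⟨fun t ht => ?_, fun s hs t ht => ?_⟩⟩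
  · have hlog : 0 ≤ log k := log_nonneg (by exact_mod_cast (by omega : 1 ≤ k))
    calc |∏ i, fi i (ψ k i) (t i)| ≤ |C₁| ^ d * ∏ i, (ψ k i : ℝ) ^ (-ϑi i) := by
          simpa using abs_prod_le_abs_pow_mul_prod
            (fun i => hboundi i _ (hψpos k (by omega) i) _ (ht i)) fun i => by positivity
      _ ≤ |C₁| ^ d * (C₀ * k ^ (-ϑ) * log k ^ (ϑ * ((#{i | ϑi i = ϑ} : ℝ) - 1))) := by
          gcongr
          exact hC₀ k hk
      _ ≤ _ := by rw [← mul_assoc, ← mul_assoc]; gcongr; exact le_max_left _ _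
  · calc _ ≤ d * C₁ ^ (d - 1) * max C₂ 0 * max 1 √(d * T ^ 2) * k ^ b * dist s t ^ a :=
          abs_prod_sub_prod_le_of_decay_holder hboundi hholderi (fun i => (hϑpos i).le) ha0
            (fun i => ha.2 ⟨i, rfl⟩) hai1 (fun i => hb.2 (Set.mem_insert_of_mem _ ⟨i, rfl⟩))
            (hb.2 (Set.mem_insert 0 _)) (hψpos k (by omega))
            (arrangement_apply_le hϑpos hψpos hψsurj hψmono (by omega)) hs ht
      _ ≤ _ := by gcongr; exact le_max_right _ _

/-- a nonincreasing arrangement (along the bound `∏ j_i^{-ϑ_i}`) of the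
tensor products `⊗_i f^i_{j_i}` of sequences satisfying (A1),(A2) with `γ_i = 0`
satisfies `‖f_k‖ ≤ C k^{-ϑ} (log k)^{ϑ(m-1)}` and `[f_k]_a ≤ C k^b`, where
`ϑ = min ϑ_i`, `m = #{i : ϑ_i = ϑ}`, `a = min a_i`, `b = (max b_i)₊`. -/
theorem stmt10 (d : ℕ) (hd : 0 < d) (T : ℝ) (hT : 0 < T)
    (ϑi ai bi : Fin d → ℝ) (C₁ C₂ : ℝ)
    (hϑi : ∀ i, 1/2 < ϑi i) (hai : ∀ i, 0 < ai i) (hai1 : ∀ i, ai i ≤ 1)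
    (fi : Fin d → ℕ → ℝ → ℝ)
    (hconti : ∀ i j, ContinuousOn (fi i j) (Set.Icc 0 T))
    (hboundi : ∀ i, ∀ j : ℕ, 1 ≤ j → ∀ t ∈ Set.Icc (0:ℝ) T,
      |fi i j t| ≤ C₁ * (j:ℝ) ^ (-(ϑi i)))
    (hholderi : ∀ i, ∀ j : ℕ, 1 ≤ j → ∀ s ∈ Set.Icc (0:ℝ) T, ∀ t ∈ Set.Icc (0:ℝ) T,
      |fi i j s - fi i j t| ≤ C₂ * (j:ℝ) ^ (bi i) * |s - t| ^ (ai i))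
    (ϑ : ℝ) (hϑ : IsLeast (Set.range ϑi) ϑ)
    (m : ℕ) (hm : m = (Finset.univ.filter (fun i => ϑi i = ϑ)).card)
    (a : ℝ) (ha : IsLeast (Set.range ai) a)
    (b : ℝ) (hb : IsGreatest (insert 0 (Set.range bi)) b)
    (ψ : ℕ → (Fin d → ℕ))
    (hψpos : ∀ k : ℕ, 1 ≤ k → ∀ i, 1 ≤ ψ k i)
    (hψinj : ∀ k l : ℕ, 1 ≤ k → 1 ≤ l → ψ k = ψ l → k = l)
    (hψsurj : ∀ v : Fin d → ℕ, (∀ i, 1 ≤ v i) → ∃ k : ℕ, 1 ≤ k ∧ ψ k = v)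
    (hψmono : ∀ k l : ℕ, 1 ≤ k → k ≤ l →
      (∏ i, (ψ l i : ℝ) ^ (-(ϑi i))) ≤ ∏ i, (ψ k i : ℝ) ^ (-(ϑi i))) :
    ∃ C : ℝ, ∀ k : ℕ, 2 ≤ k →
      (∀ t : EuclideanSpace ℝ (Fin d), t ∈ cube d T →
        |∏ i, fi i (ψ k i) (t i)| ≤ C * (k:ℝ) ^ (-ϑ) * Real.log k ^ (ϑ * ((m:ℝ) - 1))) ∧
      (∀ s : EuclideanSpace ℝ (Fin d), s ∈ cube d T →
       ∀ t : EuclideanSpace ℝ (Fin d), t ∈ cube d T →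
        |(∏ i, fi i (ψ k i) (s i)) - ∏ i, fi i (ψ k i) (t i)| ≤
          C * (k:ℝ) ^ b * dist s t ^ a) :=
  stmt10_general d T ϑi ai bi C₁ C₂ hϑi hai hai1 fi hboundi hholderi ϑ hϑ m hm a ha b hb ψ hψpos
    hψinj hψsurj hψmono
end

section
/- Let ψ : [0,T] → ℝ have finite total variation and define f_j(t) = √(2/T) ∫₀^t ψ(s) cos((t−s)/√λ_j) ds with λ_j = (π(j−1/2)/T)^{−2}. Then ‖f_j‖_∞ ≤ √(2λ_j/T) (|ψ(0)| + Var(ψ,[0,T])); in particular ‖f_j‖_∞ ≤ C j^{−1} for a constant C depending only on T and ψ. -/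
/-!
Jordan-decompose `ψ = ψ 0 + p - q` on `[0, t]` with `p, q` monotone, `p 0 = q 0 = 0` and
`p t + q t` the variation of `ψ` on `[0, t]` (take `p, q = (v ± (ψ - ψ 0)) / 2`, `v` the variation
function). For a monotone `g ≥ 0`, the layer-cake formula `g s = |{y ∈ (0, g t] | y < g s}|` and
Fubini turn `∫₀ᵗ g(s) h(s) ds` into an integral over levels `y ∈ (0, g t]` of `∫ h` over the
superlevel sets of `g`, which are intervals `(b, t]` up to a null set. For `h s = cos ((t - s) / c)`
these tail integrals are `c sin ((t - b) / c)`, of size at most `c`, so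
`|∫₀ᵗ ψ(s) cos((t-s)/c) ds| ≤ c (|ψ 0| + Var ψ)`; finally `c = √λ_j = T / (π (j - 1/2))`,
which is at most `2T / (π j)`.
-/

open Real MeasureTheory
open Set

theorem IsUpperSet.inter_Ioc_ae_eq_Ioc {U : Set ℝ} (hU : IsUpperSet U) {a t : ℝ} (hat : a ≤ t) :
    ∃ b ∈ Icc a t, (Ioc a t ∩ U : Set ℝ) =ᵐ[volume] Ioc b t := by
  by_cases hne : (Icc a t ∩ U).Nonempty
  · have hbdd : BddBelow (Icc a t ∩ U) := ⟨a, fun x hx => hx.1.1⟩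
    refine ⟨sInf (Icc a t ∩ U), ⟨le_csInf hne fun x hx => hx.1.1, ?_⟩, ?_⟩
    · obtain ⟨x, hx⟩ := hne
      exact (csInf_le hbdd hx).trans hx.1.2
    have hsub : Ioc (sInf (Icc a t ∩ U)) t ⊆ Ioc a t ∩ U := by
      intro s hs
      obtain ⟨x, hxU, hxs⟩ := exists_lt_of_csInf_lt hne hs.1
      exact ⟨⟨hxU.1.1.trans_lt hxs, hs.2⟩, hU hxs.le hxU.2⟩
    have hsup : Ioc a t ∩ U ⊆ Icc (sInf (Icc a t ∩ U)) t := fun s hs =>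
      ⟨csInf_le hbdd ⟨Ioc_subset_Icc_self hs.1, hs.2⟩, hs.1.2⟩
    exact (hsup.eventuallyLE.trans Ioc_ae_eq_Icc.symm.le).antisymm hsub.eventuallyLE
  · have hempty : Ioc a t ∩ U = ∅ :=
      Set.not_nonempty_iff_eq_empty.mp fun ⟨x, hx⟩ => hne ⟨x, Ioc_subset_Icc_self hx.1, hx.2⟩
    exact ⟨t, ⟨hat, le_rfl⟩, by rw [hempty, Ioc_self]; exact .rfl⟩

theorem abs_intervalIntegral_mul_le_of_monotone {g h : ℝ → ℝ} {a t M : ℝ} (hat : a ≤ t)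
    (hg : Monotone g) (hga : 0 ≤ g a) (hh : IntervalIntegrable h volume a t)
    (hM : ∀ b ∈ Icc a t, |∫ s in b..t, h s| ≤ M) :
    |∫ s in a..t, g s * h s| ≤ M * g t := by
  set F : ℝ → ℝ → ℝ := fun s y => (Iio (g s)).indicator (fun _ => h s) y
  have hgt : 0 ≤ g t := hga.trans (hg hat)
  have layer_cake : ∀ s ∈ Ioc a t, g s * h s = ∫ y in Ioc 0 (g t), F s y := by
    intro s hs
    have hgs : 0 ≤ g s := hga.trans (hg hs.1.le)
    have : Ioc 0 (g t) ∩ Iio (g s) = Ioo 0 (g s) := by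
      ext y
      simp only [mem_inter_iff, mem_Ioc, mem_Iio, mem_Ioo]
      exact ⟨fun h => ⟨h.1.1, h.2⟩, fun h => ⟨⟨h.1, h.2.le.trans (hg hs.2)⟩, h.2⟩⟩
    rw [setIntegral_indicator measurableSet_Iio, this, setIntegral_const, smul_eq_mul,
      measureReal_def, Real.volume_Ioo, ENNReal.toReal_ofReal (by linarith), sub_zero]
  have hF : Integrable (Function.uncurry F)
      ((volume.restrict (Ioc a t)).prod (volume.restrict (Ioc 0 (g t)))) :=
    ((intervalIntegrable_iff_integrableOn_Ioc_of_le hat).mp hh |>.comp_fst _).indicator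
      (measurableSet_lt measurable_snd (hg.measurable.comp measurable_fst))
  have inner : ∀ y, |∫ s in Ioc a t, F s y| ≤ M := by
    intro y
    obtain ⟨b, hb, hae⟩ := ((isUpperSet_Ioi (a := y)).preimage hg).inter_Ioc_ae_eq_Ioc hat
    have hFy : (fun s => F s y) = (g ⁻¹' Ioi y).indicator h := rfl
    rw [hFy, setIntegral_indicator (hg.measurable measurableSet_Ioi), setIntegral_congr_set hae,
      ← intervalIntegral.integral_of_le hb.2]
    exact hM b hb
  calc |∫ s in a..t, g s * h s|
      = ‖∫ y in Ioc 0 (g t), ∫ s in Ioc a t, F s y‖ := by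
        rw [intervalIntegral.integral_of_le hat, setIntegral_congr_fun measurableSet_Ioc layer_cake,
          integral_integral_swap hF, Real.norm_eq_abs]
    _ ≤ M * volume.real (Ioc 0 (g t)) :=
        norm_setIntegral_le_of_norm_le_const measure_Ioc_lt_top fun y _ => inner y
    _ = M * g t := by
        rw [measureReal_def, Real.volume_Ioc, ENNReal.toReal_ofReal (by linarith), sub_zero]

theorem MonotoneOn.intervalIntegrable_mul {g h : ℝ → ℝ} {a t : ℝ} (hat : a ≤ t)
    (hg : MonotoneOn g (Icc a t)) (hh : IntervalIntegrable h volume a t) :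
    IntervalIntegrable (fun s => g s * h s) volume a t := by
  rw [intervalIntegrable_iff_integrableOn_Ioc_of_le hat] at hh ⊢
  have hg' : IntegrableOn g (Ioc a t) :=
    (intervalIntegrable_iff_integrableOn_Ioc_of_le hat).mp
      (hg.mono (uIcc_of_le hat).subset).intervalIntegrable
  refine hh.bdd_mul hg'.aestronglyMeasurable (c := |g a| + |g t|) ?_
  filter_upwards [ae_restrict_mem measurableSet_Ioc] with s hs
  have has : a ∈ Icc a t := left_mem_Icc.mpr hat
  have hts : t ∈ Icc a t := right_mem_Icc.mpr hat
  have hs' := Ioc_subset_Icc_self hs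
  rw [Real.norm_eq_abs, abs_le]
  constructor <;> linarith [hg has hs' hs'.1, hg hs' hts hs'.2, abs_nonneg (g a), abs_nonneg (g t),
    neg_abs_le (g a), le_abs_self (g t)]

theorem abs_intervalIntegral_mul_le_of_monotoneOn {g h : ℝ → ℝ} {a t M : ℝ} (hat : a ≤ t)
    (hg : MonotoneOn g (Icc a t)) (hga : 0 ≤ g a) (hh : IntervalIntegrable h volume a t)
    (hM : ∀ b ∈ Icc a t, |∫ s in b..t, h s| ≤ M) :
    |∫ s in a..t, g s * h s| ≤ M * g t := by
  obtain ⟨G, hG, hgG⟩ := hg.exists_monotone_extension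
    (hg.map_isLeast (isLeast_Icc hat)).bddBelow (hg.map_isGreatest (isGreatest_Icc hat)).bddAbove
  have hgG' : EqOn (fun s => g s * h s) (fun s => G s * h s) (uIcc a t) := fun s hs => by
    rw [uIcc_of_le hat] at hs
    simp only [hgG hs]
  rw [intervalIntegral.integral_congr hgG', hgG (right_mem_Icc.mpr hat)]
  exact abs_intervalIntegral_mul_le_of_monotone hat hG (hgG (left_mem_Icc.mpr hat) ▸ hga) hh hM

theorem abs_intervalIntegral_mul_le_of_boundedVariationOn {ψ h : ℝ → ℝ} {a t M : ℝ} (hat : a ≤ t)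
    (hψ : BoundedVariationOn ψ (Icc a t)) (hh : IntervalIntegrable h volume a t)
    (hM : ∀ b ∈ Icc a t, |∫ s in b..t, h s| ≤ M) :
    |∫ s in a..t, ψ s * h s| ≤ M * (|ψ a| + (eVariationOn ψ (Icc a t)).toReal) := by
  have ha : a ∈ Icc a t := left_mem_Icc.mpr hat
  have hψ' := hψ.locallyBoundedVariationOn
  set v := variationOnFromTo ψ (Icc a t) a
  set p : ℝ → ℝ := fun s => (v s + ψ s - ψ a) / 2
  set q : ℝ → ℝ := fun s => (v s - ψ s + ψ a) / 2
  have hp : MonotoneOn p (Icc a t) := fun x hx y hy hxy => by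
    have := variationOnFromTo.add_self_monotoneOn hψ' ha hx hy hxy
    simp only [Pi.add_apply] at this
    simp only [p]
    linarith
  have hq : MonotoneOn q (Icc a t) := fun x hx y hy hxy => by
    have := variationOnFromTo.sub_self_monotoneOn hψ' ha hx hy hxy
    simp only [Pi.sub_apply] at this
    simp only [q]
    linarith
  have hva : v a = 0 := variationOnFromTo.self ψ _ a
  have hvt : v t = (eVariationOn ψ (Icc a t)).toReal := by
    rw [show v t = _ from variationOnFromTo.eq_of_le ψ _ hat, inter_self]
  have hpa : p a = 0 := by simp only [p, hva]; ring
  have hqa : q a = 0 := by simp only [q, hva]; ring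
  have jordan : (fun s => ψ s * h s) = fun s => ψ a * h s + p s * h s - q s * h s := by
    ext s
    simp only [p, q]
    ring
  have hpt : p t + q t = v t := by simp only [p, q]; ring
  have hph := hp.intervalIntegrable_mul hat hh
  rw [jordan, intervalIntegral.integral_sub ((hh.const_mul _).add hph)
      (hq.intervalIntegrable_mul hat hh), intervalIntegral.integral_add (hh.const_mul _) hph,
    intervalIntegral.integral_const_mul, ← hvt, ← hpt]
  calc |ψ a * (∫ s in a..t, h s) + (∫ s in a..t, p s * h s) - ∫ s in a..t, q s * h s|
      ≤ |ψ a| * |∫ s in a..t, h s| + |∫ s in a..t, p s * h s| + |∫ s in a..t, q s * h s| := by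
        rw [← abs_mul]
        exact (abs_sub _ _).trans (by gcongr; exact abs_add_le _ _)
    _ ≤ |ψ a| * M + M * p t + M * q t := by
        gcongr
        · exact hM a ha
        · exact abs_intervalIntegral_mul_le_of_monotoneOn hat hp hpa.ge hh hM
        · exact abs_intervalIntegral_mul_le_of_monotoneOn hat hq hqa.ge hh hM
    _ = M * (|ψ a| + (p t + q t)) := by ring

theorem intervalIntegral_cos_sub_div (b t : ℝ) {c : ℝ} (hc : c ≠ 0) :
    ∫ s in b..t, cos ((t - s) / c) = c * sin ((t - b) / c) := by
  rw [intervalIntegral.integral_comp_sub_left (fun u => cos (u / c)) t,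
    intervalIntegral.integral_comp_div (fun u => cos u) hc]
  simp [integral_cos]

theorem abs_intervalIntegral_cos_sub_div_le (b t : ℝ) {c : ℝ} (hc : 0 < c) :
    |∫ s in b..t, cos ((t - s) / c)| ≤ c := by
  rw [intervalIntegral_cos_sub_div b t hc.ne', abs_mul, abs_of_pos hc]
  exact mul_le_of_le_one_right hc.le (abs_sin_le_one _)

theorem abs_intervalIntegral_mul_cos_sub_div_le {ψ : ℝ → ℝ} {a t T c : ℝ} (hc : 0 < c)
    (ht : t ∈ Icc a T) (hψ : BoundedVariationOn ψ (Icc a T)) :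
    |∫ s in a..t, ψ s * cos ((t - s) / c)| ≤ c * (|ψ a| + (eVariationOn ψ (Icc a T)).toReal) := by
  have hsub : Icc a t ⊆ Icc a T := Icc_subset_Icc_right ht.2
  have hcos : Continuous fun s => cos ((t - s) / c) := by fun_prop
  refine (abs_intervalIntegral_mul_le_of_boundedVariationOn ht.1 (hψ.mono hsub)
    (hcos.intervalIntegrable a t) fun b _ => abs_intervalIntegral_cos_sub_div_le b t hc).trans ?_
  gcongr
  exact eVariationOn.mono ψ hsub

theorem sqrt_rpow_neg_two_le {T : ℝ} (hT : 0 < T) {j : ℕ} (hj : 1 ≤ j) :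
    √((π * ((j : ℝ) - 1 / 2) / T) ^ (-(2 : ℝ))) ≤ 2 * T / π / j := by
  have hj' : (1 : ℝ) ≤ j := by exact_mod_cast hj
  have hx : 0 < π * ((j : ℝ) - 1 / 2) := mul_pos pi_pos (by linarith)
  rw [rpow_neg (div_pos hx hT).le, rpow_two, sqrt_inv, sqrt_sq (div_pos hx hT).le, inv_div,
    div_div, div_le_div_iff₀ hx (by positivity)]
  nlinarith [mul_pos hT pi_pos]

theorem stmt13_general (T : ℝ) (hT : 0 < T) (ψ : ℝ → ℝ)
    (hBV : eVariationOn ψ (Set.Icc 0 T) ≠ ⊤)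
    (lam : ℕ → ℝ) (hlam : ∀ j : ℕ, lam j = (π * ((j:ℝ) - 1/2) / T) ^ (-(2:ℝ)))
    (f : ℕ → ℝ → ℝ)
    (hf : ∀ (j : ℕ) (t : ℝ), f j t =
      Real.sqrt (2/T) * ∫ s in (0:ℝ)..t, ψ s * Real.cos ((t - s) / Real.sqrt (lam j))) :
    (∀ j : ℕ, 1 ≤ j → ∀ t ∈ Set.Icc (0:ℝ) T,
      |f j t| ≤ Real.sqrt (2 * lam j / T) *
        (|ψ 0| + (eVariationOn ψ (Set.Icc 0 T)).toReal)) ∧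
    ∃ C : ℝ, ∀ j : ℕ, 1 ≤ j → ∀ t ∈ Set.Icc (0:ℝ) T, |f j t| ≤ C / (j:ℝ) := by
  set B := |ψ 0| + (eVariationOn ψ (Icc 0 T)).toReal
  have hlam_pos : ∀ j : ℕ, 1 ≤ j → 0 < lam j := fun j hj => by
    have hj' : (1 : ℝ) ≤ j := by exact_mod_cast hj
    rw [hlam]
    exact rpow_pos_of_pos (div_pos (mul_pos pi_pos (by linarith)) hT) _
  have bound : ∀ j : ℕ, 1 ≤ j → ∀ t ∈ Icc (0 : ℝ) T, |f j t| ≤ √(2 / T) * √(lam j) * B :=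
    fun j hj t ht => by
      rw [hf, abs_mul, abs_of_nonneg (sqrt_nonneg _), mul_assoc]
      gcongr
      exact abs_intervalIntegral_mul_cos_sub_div_le (sqrt_pos.mpr (hlam_pos j hj)) ht hBV
  refine ⟨fun j hj t ht => ?_, √(2 / T) * (2 * T / π) * B, fun j hj t ht => ?_⟩
  · rw [mul_div_right_comm, sqrt_mul (by positivity)]
    exact bound j hj t ht
  · calc |f j t| ≤ √(2 / T) * √(lam j) * B := bound j hj t ht
      _ ≤ √(2 / T) * (2 * T / π / j) * B := by
        gcongr
        rw [hlam]
        exact sqrt_rpow_neg_two_le hT hj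
      _ = √(2 / T) * (2 * T / π) * B / j := by ring

/-- if `ψ` has finite total variation on `[0,T]` and
`f_j(t) = √(2/T) ∫₀^t ψ(s) cos((t-s)/√λ_j) ds` with `λ_j = (π(j-1/2)/T)^{-2}`, then
`‖f_j‖_∞ ≤ √(2λ_j/T)(|ψ(0)| + Var(ψ,[0,T]))`; in particular `‖f_j‖_∞ ≤ C j⁻¹`. -/
theorem stmt13 (T : ℝ) (hT : 0 < T) (ψ : ℝ → ℝ)
    (hψint : IntegrableOn ψ (Set.Icc 0 T))
    (hBV : eVariationOn ψ (Set.Icc 0 T) ≠ ⊤)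
    (lam : ℕ → ℝ) (hlam : ∀ j : ℕ, lam j = (π * ((j:ℝ) - 1/2) / T) ^ (-(2:ℝ)))
    (f : ℕ → ℝ → ℝ)
    (hf : ∀ (j : ℕ) (t : ℝ), f j t =
      Real.sqrt (2/T) * ∫ s in (0:ℝ)..t, ψ s * Real.cos ((t - s) / Real.sqrt (lam j))) :
    (∀ j : ℕ, 1 ≤ j → ∀ t ∈ Set.Icc (0:ℝ) T,
      |f j t| ≤ Real.sqrt (2 * lam j / T) *
        (|ψ 0| + (eVariationOn ψ (Set.Icc 0 T)).toReal)) ∧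
    ∃ C : ℝ, ∀ j : ℕ, 1 ≤ j → ∀ t ∈ Set.Icc (0:ℝ) T, |f j t| ≤ C / (j:ℝ) :=
  stmt13_general T hT ψ hBV lam hlam f hf
end

section
/- Let ψ ∈ L¹([0,T]) be positive and nonincreasing on (0,T], with φ(t) = ∫₀^t ψ(s) ds being β-Hölder continuous, β ∈ (0,1]. Let λ_j = (π(j−1/2)/T)^{−2} and f_j(t) = √(2/T) ∫₀^t ψ(s) cos((t−s)/√λ_j) ds. Then ‖f_j‖_∞ ≤ 3√(2/T) φ(√λ_j) ≤ C λ_j^{β/2} ≤ C' j^{−β} for constants C, C' depending only on T, β and [φ]_β. -/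
/-!
Put `a = √λ_j`. On `[0, min t a]` the cosine is bounded by `1`, which gives `φ a`. On `[a, t]` the
second mean value theorem for the nonincreasing `ψ`, against `s ↦ cos ((t - s) / a)` whose
primitives are bounded by `2a`, gives `2 a ψ(a) ≤ 2 φ(a)`. The second mean value theorem comes from
writing `ψ x = ψ b + ν (x, b]` a.e. for the Stieltjes measure `ν` of `ψ` and exchanging the order of
integration, which turns `∫ ψ g` into `ψ(b) G(b) + ∫ G dν` with `G` the primitive of `g`.
The power bounds are Hölder continuity of `φ` at `0` and `√λ_j = T / (π (j - 1/2)) ≤ 2T / (π j)`.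
-/

open Real MeasureTheory Set Filter

theorem AntitoneOn.exists_finiteMeasure_eq_add_measure_Ioc {ψ : ℝ → ℝ} {a b : ℝ} (hab : a ≤ b)
    (hψ : AntitoneOn ψ (Icc a b)) :
    ∃ ν : Measure ℝ, IsFiniteMeasure ν ∧ ν.real (Ioc a b) ≤ ψ a - ψ b ∧
      ∀ᵐ x, x ∈ Ioc a b → ψ x = ψ b + ν.real (Ioc x b) := by
  set F : ℝ → ℝ := fun x => -ψ (projIcc a b hab x)
  have hF : Monotone F := fun x y hxy =>
    neg_le_neg (hψ (projIcc a b hab x).2 (projIcc a b hab y).2 (monotone_projIcc hab hxy))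
  set S := hF.stieltjesFunction
  have hS : ∀ x, S x = Function.rightLim F x := hF.stieltjesFunction_eq
  have hFmem : ∀ x ∈ Icc a b, F x = -ψ x := fun x hx => by simp [F, projIcc_of_mem hab hx]
  have hSb : S b = -ψ b := by
    rw [hS]
    refine rightLim_eq_of_tendsto (tendsto_const_nhds.congr' ?_)
    filter_upwards [self_mem_nhdsWithin] with x hx
    simp [F, projIcc_of_right_le hab (le_of_lt hx)]
  have hSa : -ψ a ≤ S a := by
    rw [hS, ← hFmem a (left_mem_Icc.2 hab)]
    exact hF.le_rightLim le_rfl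
  have hSIoc : ∀ x ≤ b, S.measure.real (Ioc x b) = S b - S x := fun x hx => by
    rw [measureReal_def, S.measure_Ioc, ENNReal.toReal_ofReal (sub_nonneg.2 (S.mono hx))]
  refine ⟨S.measure.restrict (Ioc a b), ⟨?_⟩, ?_, ?_⟩
  · simp [S.measure_Ioc]
  · rw [measureReal_restrict_apply measurableSet_Ioc, inter_self, hSIoc a hab]
    linarith
  · have hcont : ∀ᵐ x, ContinuousAt F x := by
      simpa using
        measure_eq_zero_iff_ae_notMem.1 (hF.countable_not_continuousAt.measure_zero volume)
    filter_upwards [hcont] with x hx hxab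
    rw [measureReal_restrict_apply measurableSet_Ioc,
      inter_eq_left.2 (Ioc_subset_Ioc_left hxab.1.le), hSIoc x hxab.2, hSb, hS,
      hF.continuousWithinAt_Ioi_iff_rightLim_eq.1 hx.continuousWithinAt,
      hFmem x (Ioc_subset_Icc_self hxab)]
    ring

theorem setIntegral_measureReal_Ioc_mul {ν : Measure ℝ} [IsFiniteMeasure ν] {g : ℝ → ℝ}
    {a b : ℝ} (hg : IntegrableOn g (Ioc a b)) :
    ∫ x in Ioc a b, ν.real (Ioc x b) * g x = ∫ u in Ioc a b, (∫ x in a..u, g x) ∂ν := by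
  set P : ℝ × ℝ → ℝ := {p | p.1 < p.2}.indicator (fun p => g p.1)
  have hP : Integrable P ((volume.restrict (Ioc a b)).prod (ν.restrict (Ioc a b))) :=
    (hg.comp_fst _).indicator (measurableSet_lt measurable_fst measurable_snd)
  have hleft : ∀ x ∈ Ioc a b, ν.real (Ioc x b) * g x = ∫ u in Ioc a b, P (x, u) ∂ν := by
    intro x hx
    have : (fun u => P (x, u)) = (Ioi x).indicator (fun _ => g x) := by
      ext u; simp [P, indicator_apply]
    rw [this, integral_indicator_const _ measurableSet_Ioi, smul_eq_mul,
      measureReal_restrict_apply measurableSet_Ioi, inter_comm, Ioc_inter_Ioi,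
      max_eq_right hx.1.le]
  have hright : ∀ u ∈ Ioc a b, ∫ x in a..u, g x = ∫ x in Ioc a b, P (x, u) := by
    intro u hu
    have : (fun x => P (x, u)) = (Iio u).indicator g := by
      ext x; simp [P, indicator_apply]
    have hI : Iio u ∩ Ioc a b = Ioo a u := by
      ext x; simp only [mem_inter_iff, mem_Iio, mem_Ioc, mem_Ioo]
      exact ⟨fun h => ⟨h.2.1, h.1⟩, fun h => ⟨h.2, h.1, h.2.le.trans hu.2⟩⟩
    rw [this, integral_indicator measurableSet_Iio, Measure.restrict_restrict measurableSet_Iio,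
      hI, ← integral_Ioc_eq_integral_Ioo,
      intervalIntegral.integral_of_le hu.1.le]
  rw [setIntegral_congr_fun measurableSet_Ioc hleft, setIntegral_congr_fun measurableSet_Ioc hright]
  exact integral_integral_swap hP

theorem AntitoneOn.abs_integral_mul_le {ψ g : ℝ → ℝ} {a b M : ℝ} (hab : a ≤ b)
    (hψ : AntitoneOn ψ (Icc a b)) (hψb : 0 ≤ ψ b) (hg : IntegrableOn g (Ioc a b))
    (hM : ∀ x ∈ Icc a b, |∫ s in a..x, g s| ≤ M) :
    |∫ s in a..b, ψ s * g s| ≤ M * ψ a := by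
  obtain ⟨ν, hν, hνab, hψν⟩ := hψ.exists_finiteMeasure_eq_add_measure_Ioc hab
  have hM0 : 0 ≤ M := (abs_nonneg _).trans (hM a (left_mem_Icc.2 hab))
  have hνint : IntegrableOn (fun x => ν.real (Ioc x b) * g x) (Ioc a b) := by
    refine hg.bdd_mul (c := ν.real univ) ?_ (Eventually.of_forall fun x => ?_)
    · exact (Antitone.measurable fun x y hxy =>
        measureReal_mono (Ioc_subset_Ioc_left hxy)).aestronglyMeasurable
    · rw [Real.norm_eq_abs, abs_of_nonneg measureReal_nonneg]
      exact measureReal_mono (subset_univ _)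
  have hsplit : ∫ s in a..b, ψ s * g s
      = ψ b * (∫ s in a..b, g s) + ∫ u in Ioc a b, (∫ x in a..u, g x) ∂ν := by
    rw [intervalIntegral.integral_of_le hab, intervalIntegral.integral_of_le hab,
      ← setIntegral_measureReal_Ioc_mul hg, ← integral_const_mul,
      ← integral_add (hg.const_mul _) hνint]
    refine setIntegral_congr_ae measurableSet_Ioc (hψν.mono fun x hx hxab => ?_)
    rw [hx hxab]; ring
  have hνbound : |∫ u in Ioc a b, (∫ x in a..u, g x) ∂ν| ≤ M * ν.real (Ioc a b) := by
    rw [← Real.norm_eq_abs]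
    exact norm_setIntegral_le_of_norm_le_const (measure_lt_top ν _) fun u hu =>
      hM u (Ioc_subset_Icc_self hu)
  calc |∫ s in a..b, ψ s * g s|
      ≤ ψ b * |∫ s in a..b, g s| + |∫ u in Ioc a b, (∫ x in a..u, g x) ∂ν| := by
        rw [hsplit]
        exact (abs_add_le _ _).trans_eq (by rw [abs_mul, abs_of_nonneg hψb])
    _ ≤ ψ b * M + M * (ψ a - ψ b) := by
        gcongr
        · exact hM b (right_mem_Icc.2 hab)
        · exact hνbound.trans (mul_le_mul_of_nonneg_left hνab hM0)
    _ = M * ψ a := by ring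

theorem abs_integral_cos_sub_div_le {c : ℝ} (hc : 0 < c) (t x y : ℝ) :
    |∫ s in y..x, cos ((t - s) / c)| ≤ 2 * c := by
  rw [intervalIntegral.integral_comp_sub_left (fun u => cos (u / c)),
    intervalIntegral.integral_comp_div _ hc.ne', integral_cos, smul_eq_mul, abs_mul,
    abs_of_pos hc, mul_comm]
  gcongr
  exact (abs_sub _ _).trans
    (by linarith [abs_sin_le_one ((t - y) / c), abs_sin_le_one ((t - x) / c)])

theorem AntitoneOn.sub_mul_le_integral {ψ : ℝ → ℝ} {a b : ℝ} (hab : a ≤ b)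
    (hψ : AntitoneOn ψ (Ioc a b)) (hψint : IntervalIntegrable ψ volume a b) :
    (b - a) * ψ b ≤ ∫ s in a..b, ψ s := by
  rcases hab.eq_or_lt with rfl | hab
  · simp
  rw [intervalIntegral.integral_of_le hab.le, ← Real.volume_real_Ioc_of_le hab.le,
    ← smul_eq_mul, ← setIntegral_const]
  exact setIntegral_mono_on (integrableOn_const measure_Ioc_lt_top.ne)
    hψint.1 measurableSet_Ioc fun s hs => hψ hs (right_mem_Ioc.2 hab) hs.2

theorem MeasureTheory.IntegrableOn.intervalIntegrable_of_mem_Icc {f : ℝ → ℝ} {a b u v : ℝ}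
    (hf : IntegrableOn f (Icc a b)) (hu : u ∈ Icc a b) (hv : v ∈ Icc a b) :
    IntervalIntegrable f volume u v :=
  (hf.mono_set (uIcc_subset_Icc hu hv)).intervalIntegrable

section

variable {ψ : ℝ → ℝ} {T : ℝ}

theorem monotoneOn_integral_of_pos (hψint : IntegrableOn ψ (Icc 0 T))
    (hψpos : ∀ s ∈ Ioc 0 T, 0 < ψ s) : MonotoneOn (fun x => ∫ s in 0..x, ψ s) (Icc 0 T) :=
  fun _ hu _ hv huv => intervalIntegral.integral_mono_interval le_rfl hu.1 huv
    (ae_restrict_of_forall_mem measurableSet_Ioc fun s hs => hψpos s ⟨hs.1, hs.2.trans hv.2⟩ |>.le)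
    (hψint.intervalIntegrable_of_mem_Icc (left_mem_Icc.2 (hv.1.trans hv.2)) hv)

theorem abs_integral_mul_le_integral (hψint : IntegrableOn ψ (Icc 0 T))
    (hψpos : ∀ s ∈ Ioc 0 T, 0 < ψ s) {g : ℝ → ℝ} (hg : ∀ s, |g s| ≤ 1) {x : ℝ}
    (hx : x ∈ Icc 0 T) : |∫ s in 0..x, ψ s * g s| ≤ ∫ s in 0..x, ψ s := by
  rw [← Real.norm_eq_abs]
  refine intervalIntegral.norm_integral_le_of_norm_le hx.1 (Eventually.of_forall fun s hs => ?_)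
    (hψint.intervalIntegrable_of_mem_Icc (left_mem_Icc.2 (hx.1.trans hx.2)) hx)
  have hψs := hψpos s ⟨hs.1, hs.2.trans hx.2⟩
  rw [Real.norm_eq_abs, abs_mul, abs_of_pos hψs]
  exact mul_le_of_le_one_right hψs.le (hg s)

theorem abs_integral_mul_cos_le (hψint : IntegrableOn ψ (Icc 0 T))
    (hψpos : ∀ s ∈ Ioc 0 T, 0 < ψ s) (hψanti : AntitoneOn ψ (Ioc 0 T))
    {a t : ℝ} (ha : 0 < a) (haT : a ≤ T) (ht : t ∈ Icc 0 T) :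
    |∫ s in 0..t, ψ s * cos ((t - s) / a)| ≤ 3 * ∫ s in 0..a, ψ s := by
  have hcos : ∀ s, |cos ((t - s) / a)| ≤ 1 := fun s => abs_cos_le_one _
  have hzero : (0 : ℝ) ∈ Icc 0 T := left_mem_Icc.2 (ha.le.trans haT)
  have haI : a ∈ Icc 0 T := ⟨ha.le, haT⟩
  have hφa : 0 ≤ ∫ s in 0..a, ψ s := by
    simpa using monotoneOn_integral_of_pos hψint hψpos hzero haI ha.le
  rcases le_or_gt t a with hta | hat
  · calc |∫ s in 0..t, ψ s * cos ((t - s) / a)|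
        ≤ ∫ s in 0..t, ψ s := abs_integral_mul_le_integral hψint hψpos hcos ht
      _ ≤ ∫ s in 0..a, ψ s := monotoneOn_integral_of_pos hψint hψpos ht haI hta
      _ ≤ 3 * ∫ s in 0..a, ψ s := by linarith
  have hcont : Continuous fun s => cos ((t - s) / a) := by fun_prop
  have hψat : AntitoneOn ψ (Icc a t) := hψanti.mono (Icc_subset_Ioc ha ht.2)
  have htail : |∫ s in a..t, ψ s * cos ((t - s) / a)| ≤ 2 * a * ψ a :=
    hψat.abs_integral_mul_le hat.le (hψpos t ⟨ha.trans hat, ht.2⟩).le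
      hcont.integrableOn_Ioc fun x _ => abs_integral_cos_sub_div_le ha t x a
  have hhead : a * ψ a ≤ ∫ s in 0..a, ψ s := by
    simpa using (hψanti.mono (Ioc_subset_Ioc_right haT)).sub_mul_le_integral ha.le
      (hψint.intervalIntegrable_of_mem_Icc hzero haI)
  have hii : ∀ u ∈ Icc 0 T, ∀ v ∈ Icc 0 T,
      IntervalIntegrable (fun s => ψ s * cos ((t - s) / a)) volume u v := fun u hu v hv =>
    (hψint.intervalIntegrable_of_mem_Icc hu hv).mul_continuousOn hcont.continuousOn
  rw [← intervalIntegral.integral_add_adjacent_intervals (hii 0 hzero a haI) (hii a haI t ht)]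
  calc _ ≤ |∫ s in 0..a, ψ s * cos ((t - s) / a)| + |∫ s in a..t, ψ s * cos ((t - s) / a)| :=
        abs_add_le _ _
    _ ≤ (∫ s in 0..a, ψ s) + 2 * a * ψ a :=
        add_le_add (abs_integral_mul_le_integral hψint hψpos hcos haI) htail
    _ ≤ 3 * ∫ s in 0..a, ψ s := by linarith

end

theorem sqrt_rpow_neg_two {r : ℝ} (hr : 0 ≤ r) : √(r ^ (-2 : ℝ)) = r⁻¹ := by
  rw [rpow_neg hr, rpow_two, ← inv_pow, sqrt_sq (inv_nonneg.2 hr)]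

theorem rpow_neg_two_rpow_half {r : ℝ} (hr : 0 ≤ r) (β : ℝ) :
    (r ^ (-2 : ℝ)) ^ (β / 2) = r⁻¹ ^ β := by
  rw [← rpow_mul hr, show -2 * (β / 2) = -β by ring, rpow_neg hr, inv_rpow hr]

theorem pi_mul_sub_half_div_pos {T : ℝ} (hT : 0 < T) {j : ℕ} (hj : 1 ≤ j) :
    0 < π * ((j : ℝ) - 1 / 2) / T := by
  have : (1 : ℝ) ≤ j := by exact_mod_cast hj
  exact div_pos (mul_pos pi_pos (by linarith)) hT

theorem inv_pi_mul_sub_half_div_le {T : ℝ} (hT : 0 < T) {j : ℕ} (hj : 1 ≤ j) :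
    (π * ((j : ℝ) - 1 / 2) / T)⁻¹ ≤ T := by
  have : (1 : ℝ) ≤ j := by exact_mod_cast hj
  rw [inv_div, div_le_iff₀ (mul_pos pi_pos (by linarith))]
  exact le_mul_of_one_le_right hT.le (by nlinarith [pi_gt_three])

theorem inv_pi_mul_sub_half_div_le_mul_inv {T : ℝ} (hT : 0 < T) {j : ℕ} (hj : 1 ≤ j) :
    (π * ((j : ℝ) - 1 / 2) / T)⁻¹ ≤ 2 * T / π * (j : ℝ)⁻¹ := by
  have : (1 : ℝ) ≤ j := by exact_mod_cast hj
  have := pi_pos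
  calc (π * ((j : ℝ) - 1 / 2) / T)⁻¹ = T / (π * ((j : ℝ) - 1 / 2)) := inv_div _ _
    _ ≤ T / (π * (j / 2)) := by gcongr; linarith
    _ = 2 * T / π * (j : ℝ)⁻¹ := by field_simp

theorem stmt14_general (T β Hβ : ℝ) (hT : 0 < T) (hβ : 0 < β) (hHβ : 0 ≤ Hβ)
    (ψ : ℝ → ℝ) (hψint : IntegrableOn ψ (Set.Icc 0 T))
    (hψpos : ∀ t ∈ Set.Ioc (0:ℝ) T, 0 < ψ t)
    (hψmono : ∀ s ∈ Set.Ioc (0:ℝ) T, ∀ t ∈ Set.Ioc (0:ℝ) T, s ≤ t → ψ t ≤ ψ s)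
    (φ : ℝ → ℝ) (hφ : ∀ t, φ t = ∫ s in (0:ℝ)..t, ψ s)
    (hHol : ∀ s ∈ Set.Icc (0:ℝ) T, ∀ t ∈ Set.Icc (0:ℝ) T,
      |φ s - φ t| ≤ Hβ * |s - t| ^ β)
    (lam : ℕ → ℝ) (hlam : ∀ j : ℕ, lam j = (π * ((j:ℝ) - 1/2) / T) ^ (-(2:ℝ)))
    (f : ℕ → ℝ → ℝ)
    (hf : ∀ (j : ℕ) (t : ℝ), f j t =
      Real.sqrt (2/T) * ∫ s in (0:ℝ)..t, ψ s * Real.cos ((t - s) / Real.sqrt (lam j))) :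
    (∀ j : ℕ, 1 ≤ j → ∀ t ∈ Set.Icc (0:ℝ) T,
      |f j t| ≤ 3 * Real.sqrt (2/T) * φ (Real.sqrt (lam j))) ∧
    ∃ C C' : ℝ,
      (∀ j : ℕ, 1 ≤ j →
        3 * Real.sqrt (2/T) * φ (Real.sqrt (lam j)) ≤ C * lam j ^ (β/2)) ∧
      (∀ j : ℕ, 1 ≤ j → C * lam j ^ (β/2) ≤ C' * (j:ℝ) ^ (-β)) := by
  obtain rfl : φ = fun t => ∫ s in (0:ℝ)..t, ψ s := funext hφ
  have hsqrt : ∀ j, 1 ≤ j → √(lam j) = (π * ((j:ℝ) - 1/2) / T)⁻¹ := fun j hj => by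
    rw [hlam, sqrt_rpow_neg_two (pi_mul_sub_half_div_pos hT hj).le]
  have hpow : ∀ j, 1 ≤ j → lam j ^ (β / 2) = √(lam j) ^ β := fun j hj => by
    rw [hsqrt j hj, hlam, rpow_neg_two_rpow_half (pi_mul_sub_half_div_pos hT hj).le]
  have hpos : ∀ j, 1 ≤ j → 0 < √(lam j) := fun j hj => by
    rw [hsqrt j hj]; exact inv_pos.2 (pi_mul_sub_half_div_pos hT hj)
  have hle : ∀ j, 1 ≤ j → √(lam j) ≤ T := fun j hj => by
    rw [hsqrt j hj]; exact inv_pi_mul_sub_half_div_le hT hj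
  refine ⟨fun j hj t ht => ?_, 3 * √(2 / T) * Hβ, 3 * √(2 / T) * Hβ * (2 * T / π) ^ β,
    fun j hj => ?_, fun j hj => ?_⟩
  · rw [hf, abs_mul, abs_of_nonneg (sqrt_nonneg _), mul_comm 3, mul_assoc]
    gcongr
    exact abs_integral_mul_cos_le hψint hψpos hψmono (hpos j hj) (hle j hj) ht
  · have hHolj := hHol _ ⟨(hpos j hj).le, hle j hj⟩ 0 ⟨le_rfl, hT.le⟩
    simp only [intervalIntegral.integral_same, sub_zero, abs_of_pos (hpos j hj)] at hHolj
    rw [hpow j hj, mul_assoc _ Hβ]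
    gcongr
    exact (le_abs_self _).trans hHolj
  · have hj0 : (0 : ℝ) < j := by exact_mod_cast hj
    rw [hpow j hj, hsqrt j hj, mul_assoc _ (_ ^ β), rpow_neg hj0.le, ← inv_rpow hj0.le,
      ← mul_rpow (by positivity) (by positivity)]
    exact mul_le_mul_of_nonneg_left (rpow_le_rpow (inv_pos.2 (pi_mul_sub_half_div_pos hT hj)).le
      (inv_pi_mul_sub_half_div_le_mul_inv hT hj) hβ.le) (by positivity)

/-- if `ψ ∈ L¹` is positive and nonincreasing on `(0,T]` and
`φ(t) = ∫₀^t ψ` is `β`-Hölder, then with `λ_j = (π(j-1/2)/T)^{-2}` and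
`f_j(t) = √(2/T) ∫₀^t ψ(s) cos((t-s)/√λ_j) ds`:
`‖f_j‖_∞ ≤ 3√(2/T) φ(√λ_j) ≤ C λ_j^{β/2} ≤ C' j^{-β}`. -/
theorem stmt14 (T β Hβ : ℝ) (hT : 0 < T) (hβ : 0 < β) (hβ1 : β ≤ 1) (hHβ : 0 ≤ Hβ)
    (ψ : ℝ → ℝ) (hψint : IntegrableOn ψ (Set.Icc 0 T))
    (hψpos : ∀ t ∈ Set.Ioc (0:ℝ) T, 0 < ψ t)
    (hψmono : ∀ s ∈ Set.Ioc (0:ℝ) T, ∀ t ∈ Set.Ioc (0:ℝ) T, s ≤ t → ψ t ≤ ψ s)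
    (φ : ℝ → ℝ) (hφ : ∀ t, φ t = ∫ s in (0:ℝ)..t, ψ s)
    (hHol : ∀ s ∈ Set.Icc (0:ℝ) T, ∀ t ∈ Set.Icc (0:ℝ) T,
      |φ s - φ t| ≤ Hβ * |s - t| ^ β)
    (lam : ℕ → ℝ) (hlam : ∀ j : ℕ, lam j = (π * ((j:ℝ) - 1/2) / T) ^ (-(2:ℝ)))
    (f : ℕ → ℝ → ℝ)
    (hf : ∀ (j : ℕ) (t : ℝ), f j t =
      Real.sqrt (2/T) * ∫ s in (0:ℝ)..t, ψ s * Real.cos ((t - s) / Real.sqrt (lam j))) :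
    (∀ j : ℕ, 1 ≤ j → ∀ t ∈ Set.Icc (0:ℝ) T,
      |f j t| ≤ 3 * Real.sqrt (2/T) * φ (Real.sqrt (lam j))) ∧
    ∃ C C' : ℝ,
      (∀ j : ℕ, 1 ≤ j →
        3 * Real.sqrt (2/T) * φ (Real.sqrt (lam j)) ≤ C * lam j ^ (β/2)) ∧
      (∀ j : ℕ, 1 ≤ j → C * lam j ^ (β/2) ≤ C' * (j:ℝ) ^ (-β)) :=
  stmt14_general T β Hβ hT hβ hHβ ψ hψint hψpos hψmono φ hφ hHol lam hlam f hf
end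

section
/- Riemann–Liouville kernel: for ψ(t) = t^{ρ−1/2} with ρ ∈ (0, 3/2], ρ ≠ 1/2, and f_j(t) = √(2/T) ∫₀^t ψ(s) cos(π(j−1/2)(t−s)/T) ds, one has ‖f_j‖_∞ ≤ C j^{−(ρ+1/2)} for a constant C depending only on T and ρ. -/
/-!
With `β = ρ - 1/2` and `ω = π (j - 1/2) / T ≥ π j / (2T)`, the substitution `v = ω s` gives
`∫₀ᵗ s^β cos (ω (t - s)) ds = ω^(-(β+1)) ∫₀^{ωt} v^β cos (ωt - v) dv`, so it suffices to bound the
last integral uniformly in its upper limit `X = ωt`.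

For `-1 < β ≤ 0` split at `1`: on `[0, 1]` the weight `v^β` is integrable, and on `[1, X]` one
integration by parts against the antiderivative `-sin (X - v)` leaves two bounded boundary terms
and an integral controlled by the total variation of the decreasing weight `v^β`, at most `1`. For `0 < β ≤ 1` one
integration by parts against the same antiderivative, whose boundary terms vanish (`v^β` at `0`,
`sin (X - v)` at `X`), reduces to the case of the exponent `β - 1`.
-/

open Real MeasureTheory intervalIntegral

section RpowOscillatory

variable {γ : ℝ} {g G : ℝ → ℝ}

lemma intervalIntegrable_rpow_mul (hγ : -1 < γ) (hg : Continuous g) (a b : ℝ) :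
    IntervalIntegrable (fun v => v ^ γ * g v) volume a b :=
  (intervalIntegrable_rpow' hγ).mul_continuousOn hg.continuousOn

lemma abs_integral_rpow_mul_le (hγ : -1 < γ) (hg : ∀ v, |g v| ≤ 1) {Y : ℝ} (hY : 0 ≤ Y) :
    |∫ v in (0:ℝ)..Y, v ^ γ * g v| ≤ Y ^ (γ + 1) / (γ + 1) := by
  calc |∫ v in (0:ℝ)..Y, v ^ γ * g v| ≤ ∫ v in (0:ℝ)..Y, v ^ γ := by
        rw [← Real.norm_eq_abs]
        refine norm_integral_le_of_norm_le hY
          (Filter.Eventually.of_forall fun v hv => ?_) (intervalIntegrable_rpow' hγ)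
        rw [Real.norm_eq_abs, abs_mul, abs_of_nonneg (rpow_nonneg hv.1.le γ)]
        exact mul_le_of_le_one_right (rpow_nonneg hv.1.le γ) (hg v)
    _ = Y ^ (γ + 1) / (γ + 1) := by
        rw [integral_rpow (Or.inl hγ), zero_rpow (by linarith), sub_zero]

lemma abs_integral_one_rpow_mul_le_two (hγ : γ ≤ 0) (hG : ∀ v, HasDerivAt G (g v) v)
    (hg : Continuous g) (hG1 : ∀ v, |G v| ≤ 1) {X : ℝ} (hX : 1 ≤ X) :
    |∫ v in (1:ℝ)..X, v ^ γ * g v| ≤ 2 := by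
  have hpos : ∀ v ∈ Set.uIcc 1 X, 0 < v := fun v hv => by
    rw [Set.uIcc_of_le hX] at hv; linarith [hv.1]
  have hderiv : ∀ v ∈ Set.uIcc 1 X, HasDerivAt (fun v => v ^ γ) (γ * v ^ (γ - 1)) v :=
    fun v hv => hasDerivAt_rpow_const (Or.inl (hpos v hv).ne')
  have hint : IntervalIntegrable (fun v => γ * v ^ (γ - 1)) volume 1 X :=
    (intervalIntegrable_rpow (Or.inr fun h => (hpos 0 h).false)).const_mul γ
  have hibp := integral_mul_deriv_eq_deriv_mul hderiv (fun v _ => hG v) hint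
    (hg.intervalIntegrable 1 X)
  have hrem : |∫ v in (1:ℝ)..X, γ * v ^ (γ - 1) * G v| ≤ 1 - X ^ γ :=
    calc |∫ v in (1:ℝ)..X, γ * v ^ (γ - 1) * G v| ≤ ∫ v in (1:ℝ)..X, -(γ * v ^ (γ - 1)) := by
          rw [← Real.norm_eq_abs]
          refine norm_integral_le_of_norm_le hX (g := fun v => -(γ * v ^ (γ - 1)))
            (Filter.Eventually.of_forall fun v hv => ?_) hint.neg
          have hv0 : 0 ≤ -(γ * v ^ (γ - 1)) :=
            neg_nonneg.2 (mul_nonpos_of_nonpos_of_nonneg hγ (rpow_nonneg (by linarith [hv.1]) _))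
          rw [Real.norm_eq_abs, abs_mul, ← abs_neg (γ * _), abs_of_nonneg hv0]
          exact mul_le_of_le_one_right hv0 (hG1 v)
      _ = 1 - X ^ γ := by
          rw [intervalIntegral.integral_neg, integral_eq_sub_of_hasDerivAt hderiv hint,
            one_rpow, neg_sub]
  have hXγ : 0 ≤ X ^ γ := rpow_nonneg (by linarith) γ
  have hb : |X ^ γ * G X| ≤ X ^ γ := by
    rw [abs_mul, abs_of_nonneg hXγ]; exact mul_le_of_le_one_right hXγ (hG1 X)
  rw [hibp, one_rpow, one_mul]
  linarith [abs_sub (X ^ γ * G X - G 1) (∫ v in (1:ℝ)..X, γ * v ^ (γ - 1) * G v),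
    abs_sub (X ^ γ * G X) (G 1), hG1 1]

lemma abs_integral_rpow_mul_le_of_hasDerivAt (hγ1 : -1 < γ) (hγ0 : γ ≤ 0)
    (hG : ∀ v, HasDerivAt G (g v) v) (hg : Continuous g) (hg1 : ∀ v, |g v| ≤ 1)
    (hG1 : ∀ v, |G v| ≤ 1) {X : ℝ} (hX : 0 ≤ X) :
    |∫ v in (0:ℝ)..X, v ^ γ * g v| ≤ 1 / (γ + 1) + 2 := by
  have hγ1' : 0 < γ + 1 := by linarith
  rcases le_or_gt X 1 with hX1 | hX1
  · calc |∫ v in (0:ℝ)..X, v ^ γ * g v| ≤ X ^ (γ + 1) / (γ + 1) :=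
          abs_integral_rpow_mul_le hγ1 hg1 hX
      _ ≤ 1 / (γ + 1) := by gcongr; exact rpow_le_one hX hX1 hγ1'.le
      _ ≤ 1 / (γ + 1) + 2 := by linarith
  · have h0 := abs_integral_rpow_mul_le hγ1 hg1 zero_le_one
    rw [one_rpow] at h0
    rw [← integral_add_adjacent_intervals
      (intervalIntegrable_rpow_mul hγ1 hg 0 1) (intervalIntegrable_rpow_mul hγ1 hg 1 X)]
    exact (abs_add_le _ _).trans
      (add_le_add h0 (abs_integral_one_rpow_mul_le_two hγ0 hG hg hG1 hX1.le))

lemma integral_rpow_mul_eq_of_hasDerivAt {β : ℝ} (hβ : 0 < β) (hG : ∀ v, HasDerivAt G (g v) v)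
    (hg : Continuous g) {X : ℝ} (hX : 0 ≤ X) :
    ∫ v in (0:ℝ)..X, v ^ β * g v = X ^ β * G X - β * ∫ v in (0:ℝ)..X, v ^ (β - 1) * G v := by
  have hGc : Continuous G := continuous_iff_continuousAt.2 fun v => (hG v).continuousAt
  rw [integral_mul_deriv_eq_deriv_mul_of_hasDerivAt
    (continuous_rpow_const hβ.le).continuousOn hGc.continuousOn
    (fun v hv => hasDerivAt_rpow_const (Or.inl (lt_of_le_of_lt (le_min le_rfl hX) hv.1).ne'))
    (fun v _ => hG v) ((intervalIntegrable_rpow' (by linarith)).const_mul β)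
    (hg.intervalIntegrable 0 X), zero_rpow hβ.ne', zero_mul, sub_zero]
  simp only [mul_assoc, intervalIntegral.integral_const_mul]

end RpowOscillatory

lemma exists_abs_integral_rpow_mul_cos_sub_le {β : ℝ} (hβ1 : -1 < β) (hβ2 : β ≤ 1) :
    ∃ M, ∀ X, 0 ≤ X → |∫ v in (0:ℝ)..X, v ^ β * cos (X - v)| ≤ M := by
  have hsin (X v : ℝ) : HasDerivAt (fun v => -sin (X - v)) (cos (X - v)) v := by
    simpa using ((hasDerivAt_id v).const_sub X).sin.fun_neg
  have hcos (X v : ℝ) : HasDerivAt (fun v => cos (X - v)) (sin (X - v)) v := by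
    simpa using ((hasDerivAt_id v).const_sub X).cos
  rcases le_or_gt β 0 with hβ0 | hβ0
  · exact ⟨1 / (β + 1) + 2, fun X hX => abs_integral_rpow_mul_le_of_hasDerivAt hβ1 hβ0 (hsin X)
      (by fun_prop) (fun _ => abs_cos_le_one _) (fun _ => by rw [abs_neg]; exact abs_sin_le_one _) hX⟩
  · refine ⟨β * (1 / β + 2), fun X hX => ?_⟩
    have hbound := abs_integral_rpow_mul_le_of_hasDerivAt (γ := β - 1) (by linarith) (by linarith)
      (hcos X) (by fun_prop) (fun _ => abs_sin_le_one _) (fun _ => abs_cos_le_one _) hX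
    rw [sub_add_cancel] at hbound
    rw [integral_rpow_mul_eq_of_hasDerivAt hβ0 (hsin X) (by fun_prop) hX]
    simp only [sub_self, sin_zero, neg_zero, mul_zero, zero_sub, mul_neg,
      intervalIntegral.integral_neg, neg_neg, abs_mul, abs_of_pos hβ0]
    gcongr

lemma integral_rpow_mul_comp_mul_left {β ω t : ℝ} (hω : 0 < ω) (ht : 0 ≤ t) (g : ℝ → ℝ) :
    ∫ s in (0:ℝ)..t, s ^ β * g (ω * s) = ω ^ (-(β + 1)) * ∫ v in (0:ℝ)..ω * t, v ^ β * g v := by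
  have hscale : ∫ s in (0:ℝ)..t, s ^ β * g (ω * s)
      = ω ^ (-β) * ∫ s in (0:ℝ)..t, (ω * s) ^ β * g (ω * s) := by
    rw [← intervalIntegral.integral_const_mul]
    refine integral_congr fun s hs => ?_
    rw [Set.uIcc_of_le ht] at hs
    rw [mul_rpow hω.le hs.1, ← mul_assoc, ← mul_assoc, ← rpow_add hω, neg_add_cancel, rpow_zero,
      one_mul]
  rw [hscale, integral_comp_mul_left (fun v => v ^ β * g v) hω.ne', mul_zero,
    smul_eq_mul, ← mul_assoc, ← rpow_neg_one, ← rpow_add hω, neg_add]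

theorem stmt17_general (T ρ : ℝ) (hT : 0 < T) (hρ : 0 < ρ) (hρ2 : ρ ≤ 3/2)
    (f : ℕ → ℝ → ℝ)
    (hf : ∀ (j : ℕ) (t : ℝ), f j t =
      Real.sqrt (2/T) * ∫ s in (0:ℝ)..t,
        s ^ (ρ - 1/2) * Real.cos (π * ((j:ℝ) - 1/2) * (t - s) / T)) :
    ∃ C : ℝ, ∀ j : ℕ, 1 ≤ j → ∀ t ∈ Set.Icc (0:ℝ) T,
      |f j t| ≤ C * (j:ℝ) ^ (-(ρ + 1/2)) := by
  obtain ⟨M, hM⟩ := exists_abs_integral_rpow_mul_cos_sub_le (β := ρ - 1/2) (by linarith)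
    (by linarith)
  have hM0 : 0 ≤ M := (abs_nonneg _).trans (hM 0 le_rfl)
  refine ⟨√(2/T) * (π / (2*T)) ^ (-(ρ + 1/2)) * M, fun j hj t ht => ?_⟩
  have hj1 : (1:ℝ) ≤ j := by exact_mod_cast hj
  set ω := π * ((j:ℝ) - 1/2) / T with hωdef
  have hω : 0 < ω := div_pos (mul_pos pi_pos (by linarith)) hT
  have hωj : π / (2*T) * j ≤ ω := by
    rw [div_mul_eq_mul_div, div_le_div_iff₀ (by positivity) hT]
    nlinarith [mul_nonneg (mul_pos pi_pos hT).le (sub_nonneg.2 hj1)]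
  have hfj : f j t = √(2/T) * (ω ^ (-(ρ + 1/2)) *
      ∫ v in (0:ℝ)..ω * t, v ^ (ρ - 1/2) * cos (ω * t - v)) := by
    rw [hf, show -(ρ + 1/2) = -(ρ - 1/2 + 1) by ring,
      ← integral_rpow_mul_comp_mul_left (g := fun v => cos (ω * t - v)) hω ht.1]
    congr 2 with s
    rw [hωdef]
    ring_nf
  rw [hfj, abs_mul, abs_mul, abs_of_nonneg (sqrt_nonneg _), abs_of_nonneg (rpow_nonneg hω.le _)]
  calc √(2/T) * (ω ^ (-(ρ + 1/2)) * |∫ v in (0:ℝ)..ω * t, v ^ (ρ - 1/2) * cos (ω * t - v)|)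
      ≤ √(2/T) * ((π / (2*T) * j) ^ (-(ρ + 1/2)) * M) := by
        refine mul_le_mul_of_nonneg_left (mul_le_mul ?_ (hM _ (mul_nonneg hω.le ht.1))
          (abs_nonneg _) (rpow_nonneg (by positivity) _)) (sqrt_nonneg _)
        exact rpow_le_rpow_of_nonpos (by positivity) hωj (by linarith)
    _ = √(2/T) * (π / (2*T)) ^ (-(ρ + 1/2)) * M * (j:ℝ) ^ (-(ρ + 1/2)) := by
        rw [mul_rpow (by positivity) (by positivity)]; ring

/-- Riemann–Liouville kernel: for `ψ(t) = t^{ρ-1/2}`, `ρ ∈ (0,3/2]`,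
`ρ ≠ 1/2`, and `f_j(t) = √(2/T) ∫₀^t ψ(s) cos(π(j-1/2)(t-s)/T) ds`, one has
`‖f_j‖_∞ ≤ C j^{-(ρ+1/2)}` with `C = C(T,ρ)`. -/
theorem stmt17 (T ρ : ℝ) (hT : 0 < T) (hρ : 0 < ρ) (hρ2 : ρ ≤ 3/2) (hρ3 : ρ ≠ 1/2)
    (f : ℕ → ℝ → ℝ)
    (hf : ∀ (j : ℕ) (t : ℝ), f j t =
      Real.sqrt (2/T) * ∫ s in (0:ℝ)..t,
        s ^ (ρ - 1/2) * Real.cos (π * ((j:ℝ) - 1/2) * (t - s) / T)) :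
    ∃ C : ℝ, ∀ j : ℕ, 1 ≤ j → ∀ t ∈ Set.Icc (0:ℝ) T,
      |f j t| ≤ C * (j:ℝ) ^ (-(ρ + 1/2)) :=
  stmt17_general T ρ hT hρ hρ2 f hf
end
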